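/- arXiv:1104.3191 — 5 statements merged into one kernel-verified Lean document; each statement's English description precedes it below -/
import Mathlib

section
/- Let (p_n)_{n≥1} and (u_n)_{n≥1} be summable sequences of nonnegative reals related by the renewal equation u_n = p_n + ∑_{k=1}^{n-1} p_k u_{n-k} for all n ≥ 1. Then the generating functions u(s) = ∑_{n≥1} u_n s^n and p(s) = ∑_{n≥1} p_n s^n satisfy 1 + u(s) = 1/(1 - p(s)) for all complex s with |s| ≤ 1 (in particular p(s) ≠ 1 there). -/
/-!
The renewal equation says that `u - p` is the Cauchy product of `p` and `u`; multiplying the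
`n`-th terms by `s ^ n` preserves this, so for `‖s‖ ≤ 1`, where both weighted series converge
absolutely, the Cauchy product formula gives `p(s) u(s) = u(s) - p(s)`. This excludes `p(s) = 1`
and rearranges to `(1 + u(s)) (1 - p(s)) = 1`.
-/

open Finset

variable {R : Type*}

def RenewalEquation [Semiring R] (p u : ℕ → R) : Prop :=
  ∀ n : ℕ, 1 ≤ n → u n = p n + ∑ k ∈ Ico 1 n, p k * u (n - k)

namespace RenewalEquation

theorem map {S : Type*} [Semiring R] [Semiring S] {p u : ℕ → R} (h : RenewalEquation p u)
    (φ : R →+* S) : RenewalEquation (φ ∘ p) (φ ∘ u) := fun n hn => by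
  simp [h n hn, map_sum]

theorem mul_pow [CommSemiring R] {p u : ℕ → R} (h : RenewalEquation p u) (s : R) :
    RenewalEquation (fun n => p n * s ^ n) (fun n => u n * s ^ n) := fun n hn => by
  beta_reduce
  rw [h n hn, add_mul, sum_mul]
  congr 1
  refine sum_congr rfl fun k hk => ?_
  rw [← pow_mul_pow_sub s (mem_Ico.mp hk).2.le]
  ring

theorem sum_range_mul_eq_sub [CommRing R] {p u : ℕ → R} (h : RenewalEquation p u)
    (hp0 : p 0 = 0) (hu0 : u 0 = 0) (n : ℕ) :
    ∑ k ∈ range (n + 1), p k * u (n - k) = u n - p n := by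
  rcases n with _ | m
  · simp [hp0, hu0]
  rw [range_eq_Ico, sum_Ico_succ_top (Nat.zero_le _),
    sum_eq_sum_Ico_succ_bot (Nat.succ_pos m), h (m + 1) (Nat.succ_pos m)]
  simp [hp0, hu0]

end RenewalEquation

theorem tsum_mul_tsum_eq_tsum_sub_tsum [NormedRing R] [CompleteSpace R] {f g : ℕ → R}
    (hf : Summable fun n => ‖f n‖) (hg : Summable fun n => ‖g n‖)
    (hfg : ∀ n, ∑ k ∈ range (n + 1), f k * g (n - k) = g n - f n) :
    (∑' n, f n) * ∑' n, g n = ∑' n, g n - ∑' n, f n := by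
  rw [tsum_mul_tsum_eq_tsum_sum_range_of_summable_norm hf hg, tsum_congr hfg,
    hg.of_norm.tsum_sub hf.of_norm]

theorem summable_norm_ofReal_mul_pow {𝕜 : Type*} [RCLike 𝕜] {a : ℕ → ℝ} (ha0 : ∀ n, 0 ≤ a n)
    (ha : Summable a) {s : 𝕜} (hs : ‖s‖ ≤ 1) : Summable fun n => ‖(a n : 𝕜) * s ^ n‖ := by
  refine ha.of_nonneg_of_le (fun n => norm_nonneg _) fun n => ?_
  rw [norm_mul, norm_pow, RCLike.norm_ofReal, abs_of_nonneg (ha0 n)]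
  exact mul_le_of_le_one_right (ha0 n) (pow_le_one₀ (norm_nonneg s) hs)

theorem ne_one_and_one_add_eq_one_div_of_mul_eq_sub {K : Type*} [Field K] {P U : K}
    (h : P * U = U - P) : P ≠ 1 ∧ 1 + U = 1 / (1 - P) := by
  have hP : P ≠ 1 := by
    rintro rfl
    rw [one_mul, eq_sub_iff_add_eq, add_eq_left] at h
    exact one_ne_zero h
  refine ⟨hP, ?_⟩
  rw [eq_div_iff (sub_ne_zero.mpr hP.symm)]
  linear_combination -h

theorem stmt3_general (p u : ℕ → ℝ)
    (hp0 : p 0 = 0) (hu0 : u 0 = 0)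
    (hpnn : ∀ n, 0 ≤ p n) (hunn : ∀ n, 0 ≤ u n)
    (hpsum : Summable p) (husum : Summable u)
    (hren : ∀ n : ℕ, 1 ≤ n →
      u n = p n + ∑ k ∈ Finset.Ico 1 n, p k * u (n - k)) :
    ∀ s : ℂ, ‖s‖ ≤ 1 →
      (∑' n : ℕ, (p n : ℂ) * s ^ n) ≠ 1 ∧
      1 + (∑' n : ℕ, (u n : ℂ) * s ^ n) =
        1 / (1 - ∑' n : ℕ, (p n : ℂ) * s ^ n) := by
  intro s hs
  have hrenC : RenewalEquation (fun n => (p n : ℂ) * s ^ n) (fun n => (u n : ℂ) * s ^ n) :=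
    (RenewalEquation.map hren Complex.ofRealHom).mul_pow s
  have hconv := hrenC.sum_range_mul_eq_sub (by simp [hp0]) (by simp [hu0])
  have hp := summable_norm_ofReal_mul_pow (𝕜 := ℂ) hpnn hpsum hs
  have hu := summable_norm_ofReal_mul_pow (𝕜 := ℂ) hunn husum hs
  exact ne_one_and_one_add_eq_one_div_of_mul_eq_sub (tsum_mul_tsum_eq_tsum_sub_tsum hp hu hconv)

/-- if summable nonnegative sequences `(p_n)_{n≥1}` and
`(u_n)_{n≥1}` satisfy the renewal equation
`u_n = p_n + ∑_{k=1}^{n-1} p_k u_{n-k}`, then their generating functions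
satisfy `1 + u(s) = 1/(1 - p(s))` (in particular `p(s) ≠ 1`) on `|s| ≤ 1`. -/
theorem stmt3 (p u : ℕ → ℝ)
    (hp0 : p 0 = 0) (hu0 : u 0 = 0)
    (hpnn : ∀ n, 0 ≤ p n) (hunn : ∀ n, 0 ≤ u n)
    (hpsum : Summable p) (husum : Summable u)
    (hple : (∑' n, p n) ≤ 1)
    (hren : ∀ n : ℕ, 1 ≤ n →
      u n = p n + ∑ k ∈ Finset.Ico 1 n, p k * u (n - k)) :
    ∀ s : ℂ, ‖s‖ ≤ 1 →
      (∑' n : ℕ, (p n : ℂ) * s ^ n) ≠ 1 ∧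
      1 + (∑' n : ℕ, (u n : ℂ) * s ^ n) =
        1 / (1 - ∑' n : ℕ, (p n : ℂ) * s ^ n) :=
  stmt3_general p u hp0 hu0 hpnn hunn hpsum husum hren
end

section
/- Let (u_n)_{n≥1} be a sequence of nonnegative reals with u := ∑_{n≥1} u_n < 1. Define p_n := ∑_{k=1}^n (-1)^{k+1} u_n^{*(k)}, where u^{*(k)} is the k-fold convolution of (u_n). Then the sequences satisfy the renewal identity u_n = ∑_{k=1}^n p_n^{*(k)}, equivalently p(s) = u(s)/(1 + u(s)) as generating functions on |s| ≤ 1, and ∑_{n≥1} |p_n| < ∞ with ∑_{n≥1} p_n = u/(1+u). -/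
open Finset

/-- Convolution of sequences indexed by the positive integers:
`(a*b)(n) = ∑_{j=1}^{n-1} a(j) b(n-j)`. -/
noncomputable def conv (a b : ℕ → ℝ) (n : ℕ) : ℝ :=
  ∑ j ∈ Finset.Ico 1 n, a j * b (n - j)

/-- `iterConv a k = a^{*(k)}` for `k ≥ 1`: `a^{*(1)} = a` and
`a^{*(k+1)} = a^{*(k)} * a`. -/
noncomputable def iterConv (a : ℕ → ℝ) : ℕ → ℕ → ℝ
  | 0, n => if n = 0 then 1 else 0
  | k + 1, n => if k = 0 then a n else conv (iterConv a k) a n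

lemma ico_eq_antidiagonal {R : Type*} [NonUnitalNonAssocSemiring R]
    (a b : ℕ → R) (ha : a 0 = 0) (hb : b 0 = 0) (n : ℕ) :
    ∑ j ∈ Ico 1 n, a j * b (n - j)
      = ∑ kl ∈ Finset.HasAntidiagonal.antidiagonal n, a kl.1 * b kl.2 := by
  rw [Finset.Nat.sum_antidiagonal_eq_sum_range_succ_mk]
  rcases Nat.eq_zero_or_pos n with rfl | hn
  · simp [ha]
  · rw [Finset.sum_range_succ]
    simp only [Nat.sub_self, hb, mul_zero, add_zero, Finset.range_eq_Ico]
    rw [Finset.sum_eq_sum_Ico_succ_bot (by omega : 0 < n)]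
    simp [ha]

lemma cauchy_summable {R : Type*} [NormedRing R] (a b : ℕ → R)
    (ha : a 0 = 0) (hb : b 0 = 0)
    (hA : Summable fun n => ‖a n‖) (hB : Summable fun n => ‖b n‖) :
    Summable fun n => ‖∑ j ∈ Ico 1 n, a j * b (n - j)‖ := by
  simpa only [ico_eq_antidiagonal a b ha hb] using
    summable_norm_sum_mul_antidiagonal_of_summable_norm hA hB

lemma cauchy_tsum {R : Type*} [NormedRing R] [CompleteSpace R] (a b : ℕ → R)
    (ha : a 0 = 0) (hb : b 0 = 0)
    (hA : Summable fun n => ‖a n‖) (hB : Summable fun n => ‖b n‖) :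
    ∑' n, ∑ j ∈ Ico 1 n, a j * b (n - j) = (∑' n, a n) * ∑' n, b n := by
  simp only [ico_eq_antidiagonal a b ha hb]
  exact (tsum_mul_tsum_eq_tsum_sum_antidiagonal_of_summable_norm hA hB).symm

lemma conv_nonneg {a b : ℕ → ℝ} (ha : ∀ n, 0 ≤ a n) (hb : ∀ n, 0 ≤ b n) (n : ℕ) :
    0 ≤ conv a b n :=
  Finset.sum_nonneg fun j _ => mul_nonneg (ha j) (hb _)

lemma conv_comm (a b : ℕ → ℝ) (n : ℕ) : conv a b n = conv b a n := by
  unfold conv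
  refine Finset.sum_nbij' (fun j => n - j) (fun j => n - j) ?_ ?_ ?_ ?_ ?_ <;>
    intro j hj <;> simp only [Finset.mem_Ico] at * <;> try omega
  have : n - (n - j) = j := by omega
  rw [this, mul_comm]

lemma iterConv_one (a : ℕ → ℝ) (n : ℕ) : iterConv a 1 n = a n := by simp [iterConv]

lemma iterConv_succ (a : ℕ → ℝ) (k : ℕ) (hk : 1 ≤ k) (n : ℕ) :
    iterConv a (k + 1) n = conv (iterConv a k) a n := by
  obtain ⟨j, rfl⟩ := Nat.exists_eq_add_of_le hk
  simp [iterConv]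

lemma iterConv_zero_of_lt (a : ℕ → ℝ) (ha : a 0 = 0) :
    ∀ k n, n < k → iterConv a k n = 0 := by
  intro k
  induction k with
  | zero => omega
  | succ k ih =>
    intro n hn
    rcases Nat.eq_zero_or_pos k with rfl | hk
    · interval_cases n
      simp [iterConv, ha]
    · rw [iterConv_succ a k hk n]
      unfold conv
      refine Finset.sum_eq_zero fun j hj => ?_
      simp only [Finset.mem_Ico] at hj
      rw [ih j (by omega), zero_mul]

lemma iterConv_nonneg {a : ℕ → ℝ} (ha : ∀ n, 0 ≤ a n) (k : ℕ) (hk : 1 ≤ k) :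
    ∀ n, 0 ≤ iterConv a k n := by
  induction k with
  | zero => omega
  | succ k ih =>
    intro n
    rcases Nat.eq_zero_or_pos k with rfl | hk'
    · rw [iterConv_one]; exact ha n
    · rw [iterConv_succ a k hk' n]
      exact conv_nonneg (ih hk') ha n

lemma conv_weighted (a : ℕ → ℝ) (ha : a 0 = 0) (w : ℕ → ℝ) (n : ℕ) :
    conv (fun m => ∑ k ∈ Icc 1 m, w k * iterConv a k m) a n
      = ∑ k ∈ Icc 1 n, w k * iterConv a (k + 1) n := by
  unfold conv
  have h1 : ∀ j ∈ Ico 1 n, (∑ k ∈ Icc 1 j, w k * iterConv a k j) * a (n - j)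
      = ∑ k ∈ Icc 1 n, w k * (iterConv a k j * a (n - j)) := by
    intro j hj
    simp only [Finset.mem_Ico] at hj
    rw [Finset.sum_mul,
      Finset.sum_subset (Finset.Icc_subset_Icc_right (by omega : j ≤ n))]
    · exact Finset.sum_congr rfl fun k _ => by ring
    · intro k hk hkj
      simp only [Finset.mem_Icc] at hk hkj
      rw [iterConv_zero_of_lt a ha k j (by omega), mul_zero, zero_mul]
  rw [Finset.sum_congr rfl h1, Finset.sum_comm]
  refine Finset.sum_congr rfl fun k hk => ?_
  rw [← Finset.mul_sum]
  congr 1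
  rw [iterConv_succ a k (Finset.mem_Icc.mp hk).1 n]
  rfl

/-- if `u := ∑_{n≥1} u_n < 1` and
`p_n := ∑_{k=1}^n (-1)^{k+1} u_n^{*(k)}`, then `u_n = ∑_{k=1}^n p_n^{*(k)}`,
the generating functions satisfy `p(s) = u(s)/(1 + u(s))` on `|s| ≤ 1`,
`∑ |p_n| < ∞`, and `∑ p_n = u/(1+u)`. -/
theorem stmt4 (u : ℕ → ℝ) (hu0 : u 0 = 0) (hunn : ∀ n, 0 ≤ u n)
    (husum : Summable u) (hult : (∑' n, u n) < 1)
    (p : ℕ → ℝ)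
    (hp : ∀ n, p n = ∑ k ∈ Finset.Icc 1 n, (-1 : ℝ) ^ (k + 1) * iterConv u k n) :
    (∀ n : ℕ, 1 ≤ n → u n = ∑ k ∈ Finset.Icc 1 n, iterConv p k n) ∧
    (Summable fun n => |p n|) ∧
    (∀ s : ℂ, ‖s‖ ≤ 1 →
      (∑' n : ℕ, (p n : ℂ) * s ^ n) =
        (∑' n : ℕ, (u n : ℂ) * s ^ n) / (1 + ∑' n : ℕ, (u n : ℂ) * s ^ n)) ∧
    (∑' n, p n) = (∑' n, u n) / (1 + ∑' n, u n) := by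
  have hp0 : p 0 = 0 := by simp [hp 0]
  -- key identity: p n + conv p u n = u n
  have hkey : ∀ n, p n + conv p u n = u n := by
    intro n
    have hpe : p = fun m => ∑ k ∈ Icc 1 m, (-1 : ℝ) ^ (k + 1) * iterConv u k m :=
      funext hp
    rw [hp n, hpe, conv_weighted u hu0 _ n]
    have hsum : ∀ g : ℕ → ℝ, ∑ k ∈ Icc 1 n, g k = ∑ i ∈ range n, g (1 + i) := by
      intro g
      rw [← Finset.Ico_add_one_right_eq_Icc, Finset.sum_Ico_eq_sum_range]
      simp
    rw [hsum, hsum, ← Finset.sum_add_distrib]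
    set F : ℕ → ℝ := fun k => (-1 : ℝ) ^ (k + 1) * iterConv u k n with hF
    have : ∀ i ∈ range n, (-1:ℝ) ^ (1 + i + 1) * iterConv u (1 + i) n
        + (-1:ℝ) ^ (1 + i + 1) * iterConv u (1 + i + 1) n = F (1 + i) - F (1 + i + 1) := by
      intro i _
      simp only [hF, pow_succ, pow_add]
      ring
    rw [Finset.sum_congr rfl this]
    have htel : ∑ i ∈ range n, ((fun j => F (1 + j)) i - (fun j => F (1 + j)) (i + 1))
        = F 1 - F (1 + n) := Finset.sum_range_sub' (fun j => F (1 + j)) n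
    simp only [show ∀ i, 1 + i + 1 = 1 + (i + 1) by omega] at *
    rw [htel]
    simp only [F]
    rw [iterConv_zero_of_lt u hu0 (1 + n) n (by omega), iterConv_one]
    norm_num
  -- statement 1
  have stmt1 : ∀ n : ℕ, u n = ∑ k ∈ Finset.Icc 1 n, iterConv p k n := by
    have hq : ∀ n, (∑ k ∈ Icc 1 n, iterConv p k n)
        = p n + conv (fun m => ∑ k ∈ Icc 1 m, iterConv p k m) p n := by
      intro n
      have h1 : conv (fun m => ∑ k ∈ Icc 1 m, iterConv p k m) p n
          = ∑ k ∈ Icc 1 n, iterConv p (k + 1) n := by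
        have h2 := conv_weighted p hp0 (fun _ => 1) n
        simpa using h2
      rw [h1]
      rcases n with _ | m
      · simp [hp0]
      have hsum : ∀ g : ℕ → ℝ, ∑ k ∈ Icc 1 (m + 1), g k
          = ∑ i ∈ range (m + 1), g (1 + i) := by
        intro g
        rw [← Finset.Ico_add_one_right_eq_Icc, Finset.sum_Ico_eq_sum_range]
        simp
      rw [hsum, hsum, Finset.sum_range_succ' (fun i => iterConv p (1 + i) (m + 1)) m,
        Finset.sum_range_succ]
      rw [iterConv_zero_of_lt p hp0 (1 + m + 1) (m + 1) (by omega), iterConv_one]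
      simp only [Nat.add_assoc]
      ring
    have hu' : ∀ n, u n = p n + conv u p n := by
      intro n
      rw [← hkey n, conv_comm p u]
    intro n
    induction n using Nat.strong_induction_on with
    | _ n ih =>
      rw [hu' n, hq n]
      congr 1
      unfold conv
      refine Finset.sum_congr rfl fun j hj => ?_
      rw [ih j (Finset.mem_Ico.mp hj).2]
  -- statement 2: absolute summability of p
  set t := ∑' n, u n with ht
  have ht0 : 0 ≤ t := tsum_nonneg hunn
  have hIC : ∀ k : ℕ, Summable (iterConv u (k + 1))
      ∧ ∑' n, iterConv u (k + 1) n = t ^ (k + 1) := by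
    intro k
    induction k with
    | zero =>
      constructor
      · exact husum.congr fun n => (iterConv_one u n).symm
      · rw [pow_one]
        exact tsum_congr fun n => iterConv_one u n
    | succ k ih =>
      obtain ⟨ihs, iht⟩ := ih
      have hnn := iterConv_nonneg hunn (k + 1) (by omega)
      have hnorm : Summable fun n => ‖iterConv u (k + 1) n‖ := by
        refine ihs.congr fun n => ?_
        rw [Real.norm_eq_abs, abs_of_nonneg (hnn n)]
      have hunorm : Summable fun n => ‖u n‖ := by
        refine husum.congr fun n => ?_
        rw [Real.norm_eq_abs, abs_of_nonneg (hunn n)]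
      have h00 : iterConv u (k + 1) 0 = 0 :=
        iterConv_zero_of_lt u hu0 (k + 1) 0 (by omega)
      have hs : Summable (iterConv u (k + 2)) := by
        have := (cauchy_summable _ _ h00 hu0 hnorm hunorm).of_norm
        refine this.congr fun n => ?_
        rw [iterConv_succ u (k + 1) (by omega) n]; rfl
      refine ⟨hs, ?_⟩
      have :  ∑' n, iterConv u (k + 2) n
          = ∑' (n : ℕ), ∑ j ∈ Ico 1 n, iterConv u (k + 1) j * u (n - j) := by
        refine tsum_congr fun n => ?_
        rw [iterConv_succ u (k + 1) (by omega) n]; rfl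
      rw [this, cauchy_tsum _ _ h00 hu0 hnorm hunorm, iht, ← pow_succ]
  have hFnn : ∀ x : ℕ × ℕ, 0 ≤ iterConv u (x.1 + 1) x.2 :=
    fun x => iterConv_nonneg hunn (x.1 + 1) (by omega) x.2
  have hF : Summable fun x : ℕ × ℕ => iterConv u (x.1 + 1) x.2 := by
    refine (summable_prod_of_nonneg hFnn).2 ⟨fun k => (hIC k).1, ?_⟩
    refine Summable.congr ?_ fun k => ((hIC k).2).symm
    have : Summable fun k : ℕ => t * t ^ k :=
      (summable_geometric_of_lt_one ht0 hult).mul_left t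
    exact this.congr fun k => (pow_succ' t k).symm
  have hG : Summable fun n => ∑' k, iterConv u (k + 1) n := by
    have hF' : Summable fun x : ℕ × ℕ =>
        (fun y : ℕ × ℕ => iterConv u (y.1 + 1) y.2) x.swap := hF.prod_symm
    exact ((summable_prod_of_nonneg (fun x => hFnn x.swap)).1 hF').2
  have habs : Summable fun n => |p n| := by
    refine hG.of_nonneg_of_le (fun n => abs_nonneg _) fun n => ?_
    have hfin : ∑' k, iterConv u (k + 1) n = ∑ k ∈ range n, iterConv u (k + 1) n := by
      refine tsum_eq_sum fun k hk => ?_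
      simp only [Finset.mem_range, not_lt] at hk
      exact iterConv_zero_of_lt u hu0 (k + 1) n (by omega)
    have hre : ∑ k ∈ range n, iterConv u (k + 1) n
        = ∑ k ∈ Icc 1 n, iterConv u k n := by
      rw [← Finset.Ico_add_one_right_eq_Icc, Finset.sum_Ico_eq_sum_range]
      simp [Nat.add_comm]
    rw [hfin, hre, hp n]
    calc |∑ k ∈ Icc 1 n, (-1 : ℝ) ^ (k + 1) * iterConv u k n|
        ≤ ∑ k ∈ Icc 1 n, |(-1 : ℝ) ^ (k + 1) * iterConv u k n| :=
          Finset.abs_sum_le_sum_abs _ _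
      _ = ∑ k ∈ Icc 1 n, iterConv u k n := by
          refine Finset.sum_congr rfl fun k hk => ?_
          rw [abs_mul, abs_pow, abs_neg, abs_one, one_pow, one_mul,
            abs_of_nonneg (iterConv_nonneg hunn k (Finset.mem_Icc.mp hk).1 n)]
  -- statements 3 and 4
  have hpnorm : Summable fun n => ‖p n‖ := habs.congr fun n => (Real.norm_eq_abs _).symm
  have hunorm : Summable fun n => ‖u n‖ :=
    husum.congr fun n => by rw [Real.norm_eq_abs, abs_of_nonneg (hunn n)]
  refine ⟨fun n _ => stmt1 n, habs, ?_, ?_⟩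
  · intro s hs
    set A : ℕ → ℂ := fun n => (p n : ℂ) * s ^ n with hA
    set B : ℕ → ℂ := fun n => (u n : ℂ) * s ^ n with hB
    have hA0 : A 0 = 0 := by simp [hA, hp0]
    have hB0 : B 0 = 0 := by simp [hB, hu0]
    have hAbound : ∀ n, ‖A n‖ ≤ |p n| := by
      intro n
      rw [hA]
      calc ‖(p n : ℂ) * s ^ n‖ = |p n| * ‖s‖ ^ n := by
            rw [norm_mul, norm_pow, Complex.norm_real, Real.norm_eq_abs]
        _ ≤ |p n| * 1 := by
            refine mul_le_mul_of_nonneg_left ?_ (abs_nonneg _)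
            exact pow_le_one₀ (norm_nonneg s) hs
        _ = |p n| := mul_one _
    have hBbound : ∀ n, ‖B n‖ ≤ u n := by
      intro n
      rw [hB]
      calc ‖(u n : ℂ) * s ^ n‖ = u n * ‖s‖ ^ n := by
            rw [norm_mul, norm_pow, Complex.norm_real, Real.norm_eq_abs,
              abs_of_nonneg (hunn n)]
        _ ≤ u n * 1 := by
            refine mul_le_mul_of_nonneg_left ?_ (hunn n)
            exact pow_le_one₀ (norm_nonneg s) hs
        _ = u n := mul_one _
    have hAn : Summable fun n => ‖A n‖ :=
      habs.of_nonneg_of_le (fun n => norm_nonneg _) hAbound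
    have hBn : Summable fun n => ‖B n‖ :=
      husum.of_nonneg_of_le (fun n => norm_nonneg _) hBbound
    have hAs : Summable A := hAn.of_norm
    have hBs : Summable B := hBn.of_norm
    have hCs : Summable fun n => ∑ j ∈ Ico 1 n, A j * B (n - j) :=
      (cauchy_summable A B hA0 hB0 hAn hBn).of_norm
    have hterm : ∀ n, A n + (∑ j ∈ Ico 1 n, A j * B (n - j)) = B n := by
      intro n
      have h1 : ∀ j ∈ Ico 1 n, A j * B (n - j) = ((p j * u (n - j) : ℝ) : ℂ) * s ^ n := by
        intro j hj
        simp only [Finset.mem_Ico] at hj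
        have : s ^ n = s ^ j * s ^ (n - j) := by
          rw [← pow_add]
          congr 1
          omega
        rw [hA, hB, this]
        push_cast
        ring
      rw [Finset.sum_congr rfl h1, ← Finset.sum_mul, ← Complex.ofReal_sum]
      have h2 : ∑ j ∈ Ico 1 n, (p j * u (n - j)) = conv p u n := rfl
      rw [h2, hA, hB]
      rw [← add_mul, ← Complex.ofReal_add, hkey n]
    have hsum : (∑' n, A n) + (∑' n, ∑ j ∈ Ico 1 n, A j * B (n - j)) = ∑' n, B n := by
      rw [← Summable.tsum_add hAs hCs]
      exact tsum_congr hterm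
    rw [cauchy_tsum A B hA0 hB0 hAn hBn] at hsum
    have hUnorm : ‖∑' n, B n‖ < 1 := by
      calc ‖∑' n, B n‖ ≤ ∑' n, ‖B n‖ := norm_tsum_le_tsum_norm hBn
        _ ≤ ∑' n, u n := Summable.tsum_le_tsum hBbound hBn husum
        _ < 1 := hult
    have hne : (1 : ℂ) + ∑' n, B n ≠ 0 := by
      intro h
      have : ∑' n, B n = -1 := by linear_combination h
      rw [this] at hUnorm
      simp at hUnorm
    rw [eq_div_iff hne]
    linear_combination hsum
  · have hCs : Summable (conv p u) :=
      (cauchy_summable p u hp0 hu0 hpnorm hunorm).of_norm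
    have hps : Summable p := habs.of_abs
    have hsum : (∑' n, p n) + (∑' n, conv p u n) = ∑' n, u n := by
      rw [← Summable.tsum_add hps hCs]
      exact tsum_congr hkey
    have h2 : ∑' n, conv p u n = (∑' n, p n) * ∑' n, u n :=
      cauchy_tsum p u hp0 hu0 hpnorm hunorm
    rw [h2] at hsum
    have hne : (1 : ℝ) + ∑' n, u n ≠ 0 := by
      have h3 : 0 ≤ ∑' n, u n := tsum_nonneg hunn
      positivity
    rw [eq_div_iff hne]
    linear_combination hsum
end

section
/- Let (Q_n)_{n≥1} be a positive sequence, regularly varying at infinity with some index -γ where γ > 1 (hence ∑ Q_n < ∞). Then for every ε > 0 there exists N such that limsup_{n→∞} (1/Q_n) ∑_{k=N}^{n-N} Q_k Q_{n-k} ≤ ε. Equivalently, lim_{N→∞} limsup_{n→∞} (1/Q_n) ∑_{k=N}^{n-N} Q_k Q_{n-k} = 0. -/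
/-- A positive sequence `a` is regularly varying at infinity with index `ρ`
if `a ⌊l·n⌋ / a n → l ^ ρ` for every `l > 0`. -/
def RegVar (a : ℕ → ℝ) (ρ : ℝ) : Prop :=
  ∀ l : ℝ, 0 < l →
    Filter.Tendsto (fun n : ℕ => a ⌊l * (n : ℝ)⌋₊ / a n) Filter.atTop
      (nhds (l ^ ρ))

/-!
By Egorov's theorem, `Q ⌊l n⌋ / Q n → l ^ (-γ)` uniformly on a set `E ⊆ [1, 5]` of almost full
measure. Since the intervals `{l | ⌊l r⌋ = p}` have length `1 / r`, for `m ≤ n ≤ 2 m` most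
`p ∈ [n, 2 n]` are of the form `⌊t n⌋ = ⌊u m⌋` with `t, u ∈ E`, and then `Q m ≍ Q p ≍ Q n`:
this is a Potter-type bound `Q m ≤ C Q n`. Together with `Q (2 n) ≤ ρ Q n` for some `ρ < 1 / 2`
it makes the dyadic blocks of `∑ Q k` decay geometrically. In the convolution one of `k`, `n - k`
is at least `n / 2`, so `Q k Q (n - k) ≤ C Q n (Q k + Q (n - k))` and the middle sum is at most
`2 C Q n ∑_{k ≥ N} Q k`.
-/

open Filter Set MeasureTheory
open scoped Finset ENNReal

theorem Nat.floor_mul_eq_of_mem_Ico {n p : ℕ} (hn : 0 < n) {l : ℝ}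
    (hl : l ∈ Ico ((p : ℝ) / n) ((p + 1) / n)) : ⌊l * n⌋₊ = p := by
  have hn' : (0 : ℝ) < n := Nat.cast_pos.mpr hn
  rw [Nat.floor_eq_iff (mul_nonneg ((by positivity : (0 : ℝ) ≤ p / n).trans hl.1) hn'.le)]
  exact ⟨(div_le_iff₀ hn').mp hl.1, (lt_div_iff₀ hn').mp hl.2⟩

theorem card_le_mul_volume_of_Ico_div_subset {S : Set ℝ} {n : ℕ} (hn : 0 < n) (s : Finset ℕ)
    (hs : ∀ p ∈ s, Ico ((p : ℝ) / n) ((p + 1) / n) ⊆ S) : (#s : ℝ≥0∞) ≤ n * volume S := by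
  have hn' : (0 : ℝ) < n := Nat.cast_pos.mpr hn
  have hvol (p : ℕ) : volume (Ico ((p : ℝ) / n) ((p + 1) / n)) = (n : ℝ≥0∞)⁻¹ := by
    rw [Real.volume_Ico, ← sub_div, add_sub_cancel_left, one_div, ENNReal.ofReal_inv_of_pos hn',
      ENNReal.ofReal_natCast]
  have hdisj : (s : Set ℕ).PairwiseDisjoint fun p : ℕ => Ico ((p : ℝ) / n) ((p + 1) / n) := by
    intro p _ q _ hpq
    exact Set.disjoint_left.mpr fun l hp hq =>
      hpq ((Nat.floor_mul_eq_of_mem_Ico hn hp).symm.trans (Nat.floor_mul_eq_of_mem_Ico hn hq))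
  calc (#s : ℝ≥0∞) = n * ∑ p ∈ s, volume (Ico ((p : ℝ) / n) ((p + 1) / n)) := by
        rw [Finset.sum_congr rfl fun p _ => hvol p, Finset.sum_const, nsmul_eq_mul,
          mul_left_comm, ENNReal.mul_inv_cancel (by simp [hn.ne']) (by simp), mul_one]
    _ ≤ n * volume S := by
        rw [← measure_biUnion_finset hdisj fun p _ => measurableSet_Ico]
        exact mul_le_mul_right (measure_mono (iUnion₂_subset hs)) _

theorem Ico_div_subset_Icc_one_five {r n p : ℕ} (hr : 0 < r) (hrn : r ≤ n) (hnr : n ≤ 2 * r)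
    (hnp : n ≤ p) (hpn : p ≤ 2 * n) : Ico ((p : ℝ) / r) ((p + 1) / r) ⊆ Icc 1 5 := by
  have hr' : (0 : ℝ) < r := Nat.cast_pos.mpr hr
  refine Ico_subset_Icc_self.trans (Icc_subset_Icc ?_ ?_)
  · rw [one_le_div hr']
    exact_mod_cast hrn.trans hnp
  · rw [div_le_iff₀ hr']
    have : p + 1 ≤ 5 * r := by omega
    exact_mod_cast this

theorem exists_floor_mul_eq_floor_mul {E : Set ℝ}
    (hvol : volume (Icc 1 5 \ E) ≤ ENNReal.ofReal (1 / 4)) {m n : ℕ} (hm : 0 < m) (hmn : m ≤ n)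
    (hnm : n ≤ 2 * m) : ∃ t ∈ E, ∃ u ∈ E, ⌊t * n⌋₊ = ⌊u * m⌋₊ := by
  classical
  set I : ℕ → ℕ → Set ℝ := fun r p => Ico ((p : ℝ) / r) ((p + 1) / r)
  set bad : ℕ → Finset ℕ := fun r => (Finset.Icc n (2 * n)).filter fun p => I r p ⊆ Icc 1 5 \ E
  have hcard {r : ℕ} (hr : 0 < r) (hrn : r ≤ n) : (#(bad r) : ℝ) ≤ n / 4 := by
    have h := (card_le_mul_volume_of_Ico_div_subset hr (bad r) fun p hp =>
      (Finset.mem_filter.mp hp).2).trans (mul_le_mul_right hvol _)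
    rw [← ENNReal.ofReal_natCast, ← ENNReal.ofReal_natCast r, ← ENNReal.ofReal_mul (by positivity),
      ENNReal.ofReal_le_ofReal_iff (by positivity)] at h
    have : (r : ℝ) ≤ n := by exact_mod_cast hrn
    linarith
  obtain ⟨p, hp, hpbad⟩ := Finset.exists_mem_notMem_of_card_lt_card (s := bad n ∪ bad m)
      (t := Finset.Icc n (2 * n)) <| by
    have h := (Nat.cast_le (α := ℝ)).mpr (Finset.card_union_le (bad n) (bad m))
    have := hcard (hm.trans_le hmn) le_rfl
    have := hcard hm hmn
    rw [Nat.card_Icc, ← Nat.cast_lt (α := ℝ)]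
    push_cast [show 2 * n + 1 - n = n + 1 by omega] at h ⊢
    linarith
  obtain ⟨hnp, hpn⟩ := Finset.mem_Icc.mp hp
  simp only [Finset.mem_union, Finset.mem_filter, bad, not_or, hp, true_and] at hpbad
  obtain ⟨hbadn, hbadm⟩ := hpbad
  have hgood {r : ℕ} (hr : 0 < r) (hrn : r ≤ n) (hnr : n ≤ 2 * r) (hbad : ¬ I r p ⊆ Icc 1 5 \ E) :
      ∃ t ∈ E, ⌊t * r⌋₊ = p := by
    obtain ⟨t, ht, htE⟩ := Set.not_subset.mp hbad
    exact ⟨t, by_contra fun h => htE ⟨Ico_div_subset_Icc_one_five hr hrn hnr hnp hpn ht, h⟩,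
      Nat.floor_mul_eq_of_mem_Ico hr ht⟩
  obtain ⟨t, htE, ht⟩ := hgood (hm.trans_le hmn) le_rfl (by omega) hbadn
  obtain ⟨u, huE, hu⟩ := hgood hm hmn hnm hbadm
  exact ⟨t, htE, u, huE, ht.trans hu.symm⟩

theorem summable_of_sum_Ico_two_pow_mul_le {f : ℕ → ℝ} {M : ℕ} (hM : 0 < M)
    (hf : ∀ k, M ≤ k → 0 ≤ f k) {B r : ℝ} (hr₀ : 0 ≤ r) (hr₁ : r < 1)
    (hblock : ∀ j, ∑ k ∈ Finset.Ico (2 ^ j * M) (2 ^ (j + 1) * M), f k ≤ B * r ^ j) :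
    Summable f := by
  have hsplit (J : ℕ) : ∑ k ∈ Finset.Ico M (2 ^ J * M), f k =
      ∑ j ∈ Finset.range J, ∑ k ∈ Finset.Ico (2 ^ j * M) (2 ^ (j + 1) * M), f k := by
    induction J with
    | zero => simp
    | succ J ih =>
      rw [Finset.sum_range_succ, ← ih, Finset.sum_Ico_consecutive]
      · exact Nat.le_mul_of_pos_left M (Nat.two_pow_pos J)
      · exact Nat.mul_le_mul_right M (Nat.pow_le_pow_right two_pos J.le_succ)
  have hB : 0 ≤ B := by
    have h0 := hblock 0
    rw [pow_zero, one_mul, pow_zero, mul_one] at h0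
    exact (Finset.sum_nonneg fun k hk => hf k (Finset.mem_Ico.mp hk).1).trans h0
  have hbound (J : ℕ) : ∑ k ∈ Finset.Ico M (2 ^ J * M), f k ≤ B / (1 - r) := by
    calc ∑ k ∈ Finset.Ico M (2 ^ J * M), f k ≤ ∑ j ∈ Finset.range J, B * r ^ j :=
          hsplit J ▸ Finset.sum_le_sum fun j _ => hblock j
      _ = B * ∑ j ∈ Finset.Ico 0 J, r ^ j := by rw [← Finset.mul_sum, Finset.range_eq_Ico]
      _ ≤ B * (r ^ 0 / (1 - r)) := by gcongr; exact geom_sum_Ico_le_of_lt_one hr₀ hr₁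
      _ = B / (1 - r) := by rw [pow_zero, mul_one_div]
  refine (summable_nat_add_iff M).mp <|
    summable_of_sum_range_le (c := B / (1 - r)) (fun k => hf _ (Nat.le_add_left M k)) fun n => ?_
  have hn : M + n ≤ 2 ^ n * M := by nlinarith [Nat.lt_two_pow_self (n := n)]
  calc ∑ k ∈ Finset.range n, f (k + M) = ∑ k ∈ Finset.Ico M (M + n), f k := by
        simp only [Finset.sum_Ico_eq_sum_range, add_tsub_cancel_left, add_comm]
    _ ≤ ∑ k ∈ Finset.Ico M (2 ^ n * M), f k :=
        Finset.sum_le_sum_of_subset_of_nonneg (Finset.Ico_subset_Ico_right hn)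
          fun k hk _ => hf k (Finset.mem_Ico.mp hk).1
    _ ≤ B / (1 - r) := hbound n

theorem sum_Icc_mul_sub_le {Q : ℕ → ℝ} {C : ℝ} {n N : ℕ} (hQ : ∀ k, N ≤ k → 0 ≤ Q k)
    (hC : ∀ m ≤ n, n ≤ 2 * m → Q m ≤ C * Q n) :
    ∑ k ∈ Finset.Icc N (n - N), Q k * Q (n - k) ≤
      2 * C * Q n * ∑ k ∈ Finset.Icc N (n - N), Q k := by
  have hreflect : ∑ k ∈ Finset.Icc N (n - N), Q (n - k) = ∑ k ∈ Finset.Icc N (n - N), Q k := by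
    refine Finset.sum_nbij' (n - ·) (n - ·) ?_ ?_ ?_ ?_ fun _ _ => rfl <;>
      intro k hk <;> simp only [Finset.mem_Icc] at hk ⊢ <;> omega
  calc ∑ k ∈ Finset.Icc N (n - N), Q k * Q (n - k)
      ≤ ∑ k ∈ Finset.Icc N (n - N), C * Q n * (Q k + Q (n - k)) := by
        refine Finset.sum_le_sum fun k hk => ?_
        rw [Finset.mem_Icc] at hk
        have hk₀ := hQ k hk.1
        have hnk₀ := hQ (n - k) (by omega)
        rcases le_total (2 * k) n with h | h
        · nlinarith [hC (n - k) (by omega) (by omega)]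
        · nlinarith [hC k (by omega) (by omega)]
    _ = 2 * C * Q n * ∑ k ∈ Finset.Icc N (n - N), Q k := by
        rw [← Finset.mul_sum, Finset.sum_add_distrib, hreflect]; ring

theorem sum_Icc_le_tsum_nat_add {f : ℕ → ℝ} (hf : Summable f) {N : ℕ} (hf₀ : ∀ k, N ≤ k → 0 ≤ f k)
    (K : ℕ) : ∑ k ∈ Finset.Icc N K, f k ≤ ∑' k, f (k + N) := by
  rw [← Finset.Ico_add_one_right_eq_Icc, Finset.sum_Ico_eq_sum_range]
  simp only [add_comm N]
  exact ((summable_nat_add_iff N).mpr hf).sum_le_tsum _ fun k _ => hf₀ _ (Nat.le_add_left N k)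

namespace RegVar

variable {Q : ℕ → ℝ} {α : ℝ}

theorem exists_bounds_on (hQ : ∀ n, 1 ≤ n → 0 < Q n) (hrv : RegVar Q α) {K : Set ℝ}
    (hK : IsCompact K) (hK0 : K ⊆ Ioi 0) {δ : ℝ} (hδ : 0 < δ) :
    ∃ E ⊆ K, volume (K \ E) ≤ ENNReal.ofReal δ ∧ ∃ c C : ℝ, 0 < c ∧ 0 < C ∧
      ∀ᶠ n in atTop, ∀ l ∈ E, c * Q n ≤ Q ⌊l * n⌋₊ ∧ Q ⌊l * n⌋₊ ≤ C * Q n := by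
  have hmeas (n : ℕ) : StronglyMeasurable fun l : ℝ => Q ⌊l * n⌋₊ / Q n :=
    ((measurable_from_top.comp (Nat.measurable_floor.comp
      (measurable_id.mul_const _))).div_const _).stronglyMeasurable
  obtain ⟨t, htK, -, ht, hunif⟩ := tendstoUniformlyOn_of_ae_tendsto (μ := volume) hmeas
    (by fun_prop : Measurable fun l : ℝ => l ^ α).stronglyMeasurable hK.measurableSet
    hK.measure_lt_top.ne (ae_of_all _ fun l hl => hrv l (hK0 hl)) hδ
  have hcont : ContinuousOn (fun l : ℝ => l ^ α) K :=
    fun l hl => (Real.continuousAt_rpow_const _ _ (Or.inl (hK0 hl).ne')).continuousWithinAt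
  obtain ⟨c, hc, hcK⟩ := hK.exists_forall_le' hcont fun l hl => Real.rpow_pos_of_pos (hK0 hl) α
  obtain ⟨C, hC, hCK⟩ := (hK.bddAbove_image hcont).exists_ge 0
  refine ⟨K \ t, sdiff_subset, by rwa [sdiff_sdiff_cancel_left htK], c / 2, C + c / 2,
    half_pos hc, by positivity, ?_⟩
  filter_upwards [Metric.tendstoUniformlyOn_iff.mp hunif (c / 2) (half_pos hc),
    eventually_ge_atTop 1] with n hn hn1 l hl
  have hQn := hQ n hn1
  have hdist := abs_lt.mp (Real.dist_eq _ _ ▸ hn l hl)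
  have hlow := hcK l hl.1
  have hup : l ^ α ≤ C := hCK _ (mem_image_of_mem _ hl.1)
  constructor
  · rw [← le_div_iff₀ hQn]; linarith
  · rw [← div_le_iff₀ hQn]; linarith

theorem exists_le_mul_of_le_two_mul (hQ : ∀ n, 1 ≤ n → 0 < Q n) (hrv : RegVar Q α) :
    ∃ C : ℝ, 0 < C ∧ ∀ᶠ n in atTop, ∀ m ≤ n, n ≤ 2 * m → Q m ≤ C * Q n := by
  obtain ⟨E, -, hvol, c, C, hc, hC, hbounds⟩ :=
    hrv.exists_bounds_on hQ isCompact_Icc (fun l hl => one_pos.trans_le hl.1)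
      (by norm_num : (0 : ℝ) < 1 / 4)
  obtain ⟨n₀, hn₀⟩ := eventually_atTop.mp hbounds
  refine ⟨C / c, div_pos hC hc, eventually_atTop.mpr ⟨2 * n₀ + 1, fun n hn m hmn hnm => ?_⟩⟩
  obtain ⟨t, ht, u, hu, htu⟩ := exists_floor_mul_eq_floor_mul hvol (by omega : 0 < m) hmn hnm
  have hm := (hn₀ m (by omega) u hu).1
  have hn := (hn₀ n (by omega) t ht).2
  rw [div_mul_eq_mul_div, le_div_iff₀' hc]
  rw [htu] at hn
  linarith

theorem eventually_two_mul_le (hQ : ∀ n, 1 ≤ n → 0 < Q n) (hrv : RegVar Q α) {ρ : ℝ}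
    (hρ : (2 : ℝ) ^ α < ρ) : ∀ᶠ n in atTop, Q (2 * n) ≤ ρ * Q n := by
  filter_upwards [(hrv 2 two_pos).eventually_lt_const hρ, eventually_ge_atTop 1] with n hn hn1
  rw [show ⌊(2 : ℝ) * n⌋₊ = 2 * n by exact_mod_cast Nat.floor_natCast (2 * n),
    div_lt_iff₀ (hQ n hn1)] at hn
  exact hn.le

theorem summable (hQ : ∀ n, 1 ≤ n → 0 < Q n) (hrv : RegVar Q α) (hα : α < -1) : Summable Q := by
  obtain ⟨ρ, hρα, hρ⟩ : ∃ ρ, (2 : ℝ) ^ α < ρ ∧ ρ < 1 / 2 := exists_between <| by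
    simpa [Real.rpow_neg_one] using Real.rpow_lt_rpow_of_exponent_lt one_lt_two hα
  have hρ₀ : 0 < ρ := (Real.rpow_pos_of_pos two_pos α).trans hρα
  obtain ⟨C, hC, hle⟩ := hrv.exists_le_mul_of_le_two_mul hQ
  obtain ⟨M, hM⟩ := eventually_atTop.mp
    (hle.and ((hrv.eventually_two_mul_le hQ hρα).and (eventually_ge_atTop 1)))
  have hM₁ : 1 ≤ M := (hM M le_rfl).2.2
  have htwice (j : ℕ) : 2 ^ (j + 1) * M = 2 * (2 ^ j * M) := by ring
  have hgeo (j : ℕ) : Q (2 ^ j * M) ≤ ρ ^ j * Q M := by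
    induction j with
    | zero => simp
    | succ j ih =>
      calc Q (2 ^ (j + 1) * M) ≤ ρ * Q (2 ^ j * M) :=
            htwice j ▸ (hM _ (Nat.le_mul_of_pos_left M (Nat.two_pow_pos j))).2.1
        _ ≤ ρ ^ (j + 1) * Q M := by
          rw [pow_succ', mul_assoc]; exact mul_le_mul_of_nonneg_left ih hρ₀.le
  have hQM := hQ M hM₁
  refine summable_of_sum_Ico_two_pow_mul_le hM₁ (fun k hk => (hQ k (hM₁.trans hk)).le)
    (B := C * ρ * M * Q M) (by positivity) (by linarith : 2 * ρ < 1) fun j => ?_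
  have hcard : 2 ^ (j + 1) * M - 2 ^ j * M = 2 ^ j * M := by rw [htwice]; omega
  calc ∑ k ∈ Finset.Ico (2 ^ j * M) (2 ^ (j + 1) * M), Q k
      ≤ ∑ k ∈ Finset.Ico (2 ^ j * M) (2 ^ (j + 1) * M), C * Q (2 ^ (j + 1) * M) := by
        refine Finset.sum_le_sum fun k hk => (hM _ ?_).1 k ?_ ?_ <;> rw [Finset.mem_Ico] at hk
        · exact Nat.le_mul_of_pos_left M (Nat.two_pow_pos _)
        · exact hk.2.le
        · rw [htwice]; omega
    _ = (2 ^ j * M : ℕ) * (C * Q (2 ^ (j + 1) * M)) := by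
        rw [Finset.sum_const, Nat.card_Ico, hcard, nsmul_eq_mul]
    _ ≤ (2 ^ j * M : ℕ) * (C * (ρ ^ (j + 1) * Q M)) := by gcongr; exact hgeo _
    _ = C * ρ * M * Q M * (2 * ρ) ^ j := by push_cast; ring

end RegVar

/-- for a positive sequence `(Q_n)` regularly varying with index
`-γ`, `γ > 1`, the middle part of the convolution is negligible:
for every `ε > 0` there is `N` with
`limsup_n (1/Q_n) ∑_{k=N}^{n-N} Q_k Q_{n-k} ≤ ε`. -/
theorem stmt7 (Q : ℕ → ℝ) (hQpos : ∀ n, 1 ≤ n → 0 < Q n)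
    (γ : ℝ) (hγ : 1 < γ) (hrv : RegVar Q (-γ)) :
    ∀ ε > (0 : ℝ), ∃ N : ℕ,
      Filter.limsup
        (fun n : ℕ => (1 / Q n) * ∑ k ∈ Finset.Icc N (n - N), Q k * Q (n - k))
        Filter.atTop ≤ ε := by
  intro ε hε
  obtain ⟨C, hC, hle⟩ := hrv.exists_le_mul_of_le_two_mul hQpos
  have hsum : Summable Q := hrv.summable hQpos (by linarith)
  obtain ⟨N, hNε, hN₁⟩ := (((tendsto_sum_nat_add Q).const_mul (2 * C)).eventually_lt_const
    (by rwa [mul_zero] : 2 * C * 0 < ε)).and (eventually_ge_atTop 1) |>.exists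
  have hQ₀ (k : ℕ) (hk : N ≤ k) : 0 ≤ Q k := (hQpos k (hN₁.trans hk)).le
  refine ⟨N, limsup_le_of_le (isCoboundedUnder_le_of_eventually_le atTop (x := 0)
    ((eventually_ge_atTop 1).mono fun n hn => ?_)) ?_⟩
  · refine mul_nonneg (one_div_pos.mpr (hQpos n hn)).le (Finset.sum_nonneg fun k hk => ?_)
    rw [Finset.mem_Icc] at hk
    exact mul_nonneg (hQ₀ k hk.1) (hQ₀ _ (by omega))
  filter_upwards [hle, eventually_ge_atTop 1] with n hn hn₁
  have hQn := hQpos n hn₁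
  calc 1 / Q n * ∑ k ∈ Finset.Icc N (n - N), Q k * Q (n - k)
      ≤ 1 / Q n * (2 * C * Q n * ∑' k, Q (k + N)) := by
        gcongr
        exact (sum_Icc_mul_sub_le hQ₀ hn).trans
          (by gcongr; exact sum_Icc_le_tsum_nat_add hsum hQ₀ _)
    _ = 2 * C * ∑' k, Q (k + N) := by field_simp
    _ ≤ ε := hNε.le
end

section
/- Let S_n be a random walk on ℤ^d with i.i.d. steps, τ its first return time to the origin, and let m, n be integers with 1 ≤ m < n. Then P{τ = n} = ∑_{x ∈ ℤ^d, x ≠ 0} P{S_m = x, τ > m} · P{S_{n-m} = -x, τ > n-m}. -/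
/-!
Cutting a path that first returns to `0` at time `n` at the intermediate time `m` leaves a
path from `0` to some `x ≠ 0` that avoids `0`, followed by an increment path which first
reaches `-x` at time `n - m`; the two pieces are independent. Reading the increments of the
second piece backwards, which preserves the law of i.i.d. steps, turns "first reaches `-x` at
time `n - m`" into "ends at `-x` without visiting `0`".
-/

open MeasureTheory ProbabilityTheory Finset

namespace RandomWalk

section Paths

variable {V : Type*}

def ReachesAvoidingZero [Zero V] (p : ℕ → V) (N : ℕ) (y : V) : Prop :=
  p N = y ∧ ∀ k, 0 < k → k ≤ N → p k ≠ 0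

def ReachesFirstAt (p : ℕ → V) (N : ℕ) (y : V) : Prop :=
  p N = y ∧ ∀ k, 0 < k → k < N → p k ≠ y

lemma reachesAvoidingZero_congr [Zero V] {p q : ℕ → V} {N : ℕ} (h : ∀ k ≤ N, p k = q k)
    (y : V) : ReachesAvoidingZero p N y ↔ ReachesAvoidingZero q N y := by
  unfold ReachesAvoidingZero
  grind

lemma reachesFirstAt_congr {p q : ℕ → V} {N : ℕ} (h : ∀ k ≤ N, p k = q k) (y : V) :
    ReachesFirstAt p N y ↔ ReachesFirstAt q N y := by
  unfold ReachesFirstAt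
  grind

variable [AddCommGroup V]

lemma reachesFirstAt_add_zero_iff {p : ℕ → V} {m N : ℕ} (hm : 0 < m) (hN : 0 < N) :
    ReachesFirstAt p (m + N) 0 ↔
      ∃ x ≠ 0, ReachesAvoidingZero p m x ∧
        ReachesFirstAt (fun j ↦ p (m + j) - p m) N (-x) := by
  unfold ReachesFirstAt ReachesAvoidingZero
  constructor
  · rintro ⟨hend, hne⟩
    refine ⟨p m, hne m hm (by omega), ⟨rfl, fun k hk hkm ↦ hne k hk (by omega)⟩, ?_, ?_⟩
    · simp only [hend, zero_sub]
    · intro j hj hjN h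
      exact hne (m + j) (by omega) (by omega) (by simpa using h)
  · rintro ⟨x, -, ⟨rfl, hne⟩, hend, hne'⟩
    refine ⟨by simpa using hend, fun k hk hkN ↦ ?_⟩
    rcases le_or_gt k m with hkm | hkm
    · exact hne k hk hkm
    · obtain ⟨j, rfl⟩ := Nat.exists_eq_add_of_lt hkm
      intro h
      exact hne' (j + 1) (by omega) (by omega) (by simp only [← add_assoc, h, zero_sub])

lemma reachesFirstAt_iff_reachesAvoidingZero_reverse {p : ℕ → V} (hp : p 0 = 0) {N : ℕ}
    {y : V} (hy : y ≠ 0) :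
    ReachesFirstAt p N y ↔ ReachesAvoidingZero (fun k ↦ p N - p (N - k)) N y := by
  unfold ReachesFirstAt ReachesAvoidingZero
  simp only [Nat.sub_self, hp, sub_zero, ne_eq, sub_eq_zero]
  constructor
  · rintro ⟨rfl, hne⟩
    refine ⟨rfl, fun k hk hkN h ↦ ?_⟩
    rcases Nat.eq_zero_or_pos (N - k) with h0 | h0
    · rw [h0, hp] at h
      exact hy h
    · exact hne (N - k) h0 (by omega) h.symm
  · rintro ⟨rfl, hne⟩
    exact ⟨rfl, fun k hk hkN h ↦
      hne (N - k) (by omega) (by omega) (by rw [Nat.sub_sub_self hkN.le, h])⟩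

end Paths

section PrefixSum

variable {V : Type*} {N : ℕ}

def prefixSum [AddCommMonoid V] (v : Fin N → V) (k : ℕ) : V :=
  ∑ i ∈ univ.filter (fun i : Fin N ↦ (i : ℕ) < k), v i

lemma prefixSum_zero [AddCommMonoid V] (v : Fin N → V) : prefixSum v 0 = 0 := by
  simp [prefixSum]

lemma prefixSum_eq_sum_range [AddCommMonoid V] (g : ℕ → V) {k : ℕ} (hk : k ≤ N) :
    prefixSum (fun i : Fin N ↦ g i) k = ∑ j ∈ range k, g j := by
  rw [prefixSum, sum_filter, Fin.sum_univ_eq_sum_range (fun j ↦ if j < k then g j else 0),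
    ← sum_filter]
  congr 1
  ext j
  simp only [mem_filter, mem_range]
  omega

lemma prefixSum_rev [AddCommGroup V] (v : Fin N → V) (k : ℕ) :
    prefixSum (v ∘ Fin.rev) k = prefixSum v N - prefixSum v (N - k) := by
  have hrev : prefixSum (v ∘ Fin.rev) k =
      ∑ i ∈ univ.filter (fun i : Fin N ↦ ¬ (i : ℕ) < N - k), v i :=
    sum_nbij' Fin.rev Fin.rev
      (by simp only [mem_filter, mem_univ, true_and, Fin.val_rev]; omega)
      (by simp only [mem_filter, mem_univ, true_and, Fin.val_rev]; omega)
      (by simp) (by simp) (by simp)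
  have hall : prefixSum v N = ∑ i, v i := by simp [prefixSum]
  rw [hrev, hall, prefixSum,
    ← sum_filter_not_add_sum_filter univ (fun i : Fin N ↦ (i : ℕ) < N - k),
    add_sub_cancel_right]

lemma measure_pi_preimage_comp_rev [MeasurableSpace V] (ν : Measure V) [SigmaFinite ν]
    {s : Set (Fin N → V)} (hs : MeasurableSet s) :
    Measure.pi (fun _ ↦ ν) ((· ∘ Fin.rev) ⁻¹' s) = Measure.pi (fun _ ↦ ν) s := by
  have h : ⇑(MeasurableEquiv.piCongrLeft (fun _ : Fin N ↦ V) Fin.revPerm) =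
      (· ∘ Fin.rev) := by
    ext v i
    simp [MeasurableEquiv.coe_piCongrLeft, Equiv.piCongrLeft_apply_eq_cast]
  rw [← h]
  exact (measurePreserving_piCongrLeft (fun _ ↦ ν) Fin.revPerm).measure_preimage
    hs.nullMeasurableSet

end PrefixSum

section Walk

variable {Ω V : Type*} {ξ : ℕ → Ω → V}

def walk [AddCommMonoid V] (ξ : ℕ → Ω → V) (k : ℕ) (ω : Ω) : V :=
  ∑ i ∈ range k, ξ i ω

def block (ξ : ℕ → Ω → V) (a N : ℕ) (ω : Ω) : Fin N → V := fun i ↦ ξ (a + i) ω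

variable [AddCommGroup V]

lemma prefixSum_block {a N k : ℕ} (hk : k ≤ N) (ω : Ω) :
    prefixSum (block ξ a N ω) k = walk ξ (a + k) ω - walk ξ a ω := by
  unfold block
  rw [prefixSum_eq_sum_range (fun j ↦ ξ (a + j) ω) hk, walk, walk, sum_range_add,
    add_sub_cancel_left]

lemma preimage_block_setOf {P : (ℕ → V) → Prop} {a N : ℕ}
    (hP : ∀ p q : ℕ → V, (∀ k ≤ N, p k = q k) → (P p ↔ P q)) :
    block ξ a N ⁻¹' {v | P (prefixSum v)} =
      {ω | P fun k ↦ walk ξ (a + k) ω - walk ξ a ω} := by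
  ext ω
  exact hP _ _ fun k hk ↦ prefixSum_block hk ω

lemma setOf_reachesAvoidingZero_walk (N : ℕ) (y : V) :
    {ω | ReachesAvoidingZero (walk ξ · ω) N y} =
      block ξ 0 N ⁻¹' {v | ReachesAvoidingZero (prefixSum v) N y} := by
  rw [preimage_block_setOf fun _ _ h ↦ reachesAvoidingZero_congr h y]
  simp [walk]

lemma setOf_reachesFirstAt_walk_shift (a N : ℕ) (y : V) :
    {ω | ReachesFirstAt (fun j ↦ walk ξ (a + j) ω - walk ξ a ω) N y} =
      block ξ a N ⁻¹' {v | ReachesFirstAt (prefixSum v) N y} :=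
  (preimage_block_setOf fun _ _ h ↦ reachesFirstAt_congr h y).symm

lemma setOf_reachesFirstAt_walk_add_zero {m N : ℕ} (hm : 0 < m) (hN : 0 < N) :
    {ω | ReachesFirstAt (walk ξ · ω) (m + N) 0} =
      ⋃ x : {y : V // y ≠ 0}, {ω | ReachesAvoidingZero (walk ξ · ω) m x} ∩
        {ω | ReachesFirstAt (fun j ↦ walk ξ (m + j) ω - walk ξ m ω) N (-x)} := by
  ext ω
  simp only [Set.mem_ofPred_eq, Set.mem_iUnion, Set.mem_inter_iff, Subtype.exists,
    exists_prop]
  exact reachesFirstAt_add_zero_iff hm hN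

end Walk

section IID

variable {Ω V : Type*} [MeasurableSpace Ω] [MeasurableSpace V] {μ : Measure Ω}
  {ξ : ℕ → Ω → V}

lemma measurable_block (hmeas : ∀ i, Measurable (ξ i)) (a N : ℕ) : Measurable (block ξ a N) :=
  measurable_pi_lambda _ fun _ ↦ hmeas _

lemma map_block [IsProbabilityMeasure μ] (hmeas : ∀ i, Measurable (ξ i))
    (hindep : iIndepFun ξ μ) (hident : ∀ i, IdentDistrib (ξ i) (ξ 0) μ μ) (a N : ℕ) :
    μ.map (block ξ a N) = Measure.pi fun _ ↦ μ.map (ξ 0) := by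
  have hindep' : iIndepFun (fun i : Fin N ↦ ξ (a + i)) μ :=
    hindep.precomp fun i j h ↦ Fin.ext (by simpa using h)
  rw [show block ξ a N = fun ω (i : Fin N) ↦ ξ (a + i) ω from rfl,
    hindep'.map_fun_eq_pi_map fun _ ↦ (hmeas _).aemeasurable]
  simp_rw [(hident _).map_eq]

lemma indepFun_block_block (hmeas : ∀ i, Measurable (ξ i)) (hindep : iIndepFun ξ μ)
    (m N : ℕ) : IndepFun (block ξ 0 m) (block ξ m N) μ := by
  have h := hindep.indepFun_finset (range m) (Ico m (m + N))
    (by simp only [disjoint_left, mem_range, mem_Ico]; omega) hmeas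
  exact h.comp (φ := fun g (i : Fin m) ↦ g ⟨0 + i, by simp⟩)
    (ψ := fun g (i : Fin N) ↦ g ⟨m + i, by simp⟩)
    (measurable_pi_lambda _ fun _ ↦ measurable_pi_apply _)
    (measurable_pi_lambda _ fun _ ↦ measurable_pi_apply _)

variable [AddCommGroup V] [DiscreteMeasurableSpace V] [Countable V] [IsProbabilityMeasure μ]

lemma measure_reachesFirstAt_walk_shift (hmeas : ∀ i, Measurable (ξ i))
    (hindep : iIndepFun ξ μ) (hident : ∀ i, IdentDistrib (ξ i) (ξ 0) μ μ) (a N : ℕ)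
    {y : V} (hy : y ≠ 0) :
    μ {ω | ReachesFirstAt (fun j ↦ walk ξ (a + j) ω - walk ξ a ω) N y} =
      μ {ω | ReachesAvoidingZero (walk ξ · ω) N y} := by
  rw [setOf_reachesFirstAt_walk_shift, setOf_reachesAvoidingZero_walk,
    ← Measure.map_apply (measurable_block hmeas _ _) .of_discrete,
    ← Measure.map_apply (measurable_block hmeas _ _) .of_discrete,
    map_block hmeas hindep hident, map_block hmeas hindep hident]
  conv_rhs => rw [← measure_pi_preimage_comp_rev _ .of_discrete]
  congr with v
  exact (reachesFirstAt_iff_reachesAvoidingZero_reverse (prefixSum_zero v) hy).trans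
    (reachesAvoidingZero_congr (fun _ _ ↦ (prefixSum_rev v _).symm) _)

theorem measure_reachesFirstAt_walk_zero (hmeas : ∀ i, Measurable (ξ i))
    (hindep : iIndepFun ξ μ) (hident : ∀ i, IdentDistrib (ξ i) (ξ 0) μ μ) {m N : ℕ}
    (hm : 0 < m) (hN : 0 < N) :
    μ {ω | ReachesFirstAt (walk ξ · ω) (m + N) 0} =
      ∑' x : {y : V // y ≠ 0}, μ {ω | ReachesAvoidingZero (walk ξ · ω) m x} *
        μ {ω | ReachesAvoidingZero (walk ξ · ω) N (-x)} := by
  have hA := setOf_reachesAvoidingZero_walk (ξ := ξ) m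
  have hC := setOf_reachesFirstAt_walk_shift (ξ := ξ) m N
  rw [setOf_reachesFirstAt_walk_add_zero hm hN, measure_iUnion ?disjoint ?measurable]
  case disjoint =>
    exact fun x y hxy ↦ Set.disjoint_left.2 fun ω hx hy ↦
      hxy (Subtype.ext (hx.1.1.symm.trans hy.1.1))
  case measurable =>
    intro x
    rw [hA, hC]
    exact (measurable_block hmeas _ _ .of_discrete).inter
      (measurable_block hmeas _ _ .of_discrete)
  refine tsum_congr fun x ↦ ?_
  rw [hA, hC, (indepFun_block_block hmeas hindep m N).measure_inter_preimage_eq_mul _ _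
    .of_discrete .of_discrete, ← hA, ← hC,
    measure_reachesFirstAt_walk_shift hmeas hindep hident m N (neg_ne_zero.2 x.2)]

end IID

end RandomWalk

open RandomWalk

/-- for `1 ≤ m < n`,
`P{τ = n} = ∑_{x ≠ 0} P{S_m = x, τ > m} · P{S_{n-m} = -x, τ > n-m}`. -/
theorem stmt9
    {d : ℕ} {Ω : Type*} [MeasurableSpace Ω]
    (μ : MeasureTheory.Measure Ω) [MeasureTheory.IsProbabilityMeasure μ]
    (ξ : ℕ → Ω → (Fin d → ℤ))
    (hmeas : ∀ i, Measurable (ξ i))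
    (hindep : ProbabilityTheory.iIndepFun ξ μ)
    (hident : ∀ i, ProbabilityTheory.IdentDistrib (ξ i) (ξ 0) μ μ)
    (S : ℕ → Ω → (Fin d → ℤ))
    (hS : ∀ n ω, S n ω = ∑ i ∈ Finset.range n, ξ i ω)
    (m n : ℕ) (hm : 1 ≤ m) (hmn : m < n) :
    (μ {ω | S n ω = 0 ∧ ∀ k, 0 < k → k < n → S k ω ≠ 0}).toReal =
      ∑' x : {y : Fin d → ℤ // y ≠ 0},
        (μ {ω | S m ω = x.1 ∧ ∀ k, 0 < k → k ≤ m → S k ω ≠ 0}).toReal *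
          (μ {ω | S (n - m) ω = -x.1 ∧
            ∀ k, 0 < k → k ≤ n - m → S k ω ≠ 0}).toReal := by
  obtain rfl : S = walk ξ := funext₂ hS
  obtain ⟨N, rfl⟩ : ∃ N, n = m + N := ⟨n - m, by omega⟩
  rw [Nat.add_sub_cancel_left]
  exact (congrArg ENNReal.toReal
    (measure_reachesFirstAt_walk_zero hmeas hindep hident hm (by omega))).trans
    ((ENNReal.tsum_toReal_eq fun _ ↦
        ENNReal.mul_ne_top (measure_ne_top _ _) (measure_ne_top _ _)).trans
      (tsum_congr fun _ ↦ ENNReal.toReal_mul))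
end

section
/- Let S_n be a random walk on ℤ^d with i.i.d. steps and τ its first return time to the origin. Suppose (Q_n) is a positive, regularly varying sequence with index -γ, γ > 1, such that: (i) P{S_n = x} ≤ Q_n for all x ∈ ℤ^d and n ≥ 1; (ii) for every fixed k, sup_{x ∈ ℤ^d} |P{S_{n-k} = x} - P{S_n = x}| = o(Q_n). Let p = P{τ < ∞} and let r_n → ∞ be any sequence. Then sup_{x : ‖x‖ > r_n} |P{S_n = x, τ > n} - (1-p) P{S_n = x}| = o(Q_n) as n → ∞. -/
/-!
Splitting according to the first return time `τ`,
`P{S_n = x} = P{S_n = x, τ > n} + ∑_{0 < k ≤ n} P{τ = k} P{S_{n-k} = x}`, so for any fixed `K`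
the error `P{S_n = x, τ > n} - (1 - p) P{S_n = x}` equals
`P{K < τ < ∞} P{S_n = x} + ∑_{k ≤ K} P{τ = k} (P{S_n = x} - P{S_{n-k} = x})
  - ∑_{K < k ≤ n} P{τ = k} P{S_{n-k} = x}`.
The first term is a tail of `p`, the second is small by smoothness, the part `K < k ≤ n - K` of
the last sum is at most `∑ Q_k Q_{n-k} = o(Q_n)`, and its part `k > n - K` is small because the
walk would have to reach the far point `x` in fewer than `K` steps.

Both `∑ Q_n < ∞` and the convolution bound rest on a weak uniform convergence theorem,
`Q_m ≍ Q_n` for `m / n` in a compact subset of `(0, ∞)`. By Egorov's theorem `Q ⌊l n⌋ / Q n` is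
uniformly comparable with `1` for `l` off a set of small measure, and counting the intervals
`{l | ⌊l n⌋ = j}` produces good `l, l'` with `⌊l n⌋ = ⌊l' m⌋`.
-/

open MeasureTheory Filter Finset ProbabilityTheory
open scoped ENNReal Topology

theorem card_mul_le_measure_of_pairwiseDisjoint {α ι : Type*} [MeasurableSpace α]
    (μ : Measure α) {s : Finset ι} {I : ι → Set α} {B : Set α} {c : ℝ≥0∞}
    (hI : ∀ i ∈ s, MeasurableSet (I i)) (hd : (s : Set ι).PairwiseDisjoint I)
    (hc : ∀ i ∈ s, c ≤ μ (I i)) (hB : ∀ i ∈ s, I i ⊆ B) :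
    #s * c ≤ μ B :=
  calc #s * c = ∑ _i ∈ s, c := by rw [sum_const, nsmul_eq_mul]
    _ ≤ ∑ i ∈ s, μ (I i) := sum_le_sum hc
    _ = μ (⋃ i ∈ s, I i) := (measure_biUnion_finset hd hI).symm
    _ ≤ μ B := measure_mono (Set.iUnion₂_subset hB)

theorem Nat.floor_mul_eq_of_mem_Ico_s10 {N j : ℕ} (hN : 0 < N) {l : ℝ}
    (hl : l ∈ Set.Ico ((j : ℝ) / N) ((j + 1) / N)) : ⌊l * N⌋₊ = j := by
  have hN' : (0 : ℝ) < N := by exact_mod_cast hN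
  have h₁ : (j : ℝ) ≤ l * N := (div_le_iff₀ hN').1 hl.1
  rw [Nat.floor_eq_iff ((Nat.cast_nonneg j).trans h₁)]
  exact ⟨h₁, (lt_div_iff₀ hN').1 hl.2⟩

open Classical in
theorem card_filter_Ico_subset_lt {B : Set ℝ} {v : ℝ} (hB : volume B < ENNReal.ofReal v)
    {N : ℕ} (hN : 0 < N) (J : Finset ℕ) :
    (#(J.filter fun j : ℕ ↦ Set.Ico ((j : ℝ) / N) ((j + 1) / N) ⊆ B) : ℝ) < N * v := by
  have hN' : (0 : ℝ) < N := by exact_mod_cast hN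
  set bad := J.filter fun j : ℕ ↦ Set.Ico ((j : ℝ) / N) ((j + 1) / N) ⊆ B
  have hcard : (#bad : ℝ≥0∞) * ENNReal.ofReal (1 / N) ≤ volume B :=
    card_mul_le_measure_of_pairwiseDisjoint volume (fun _ _ ↦ measurableSet_Ico)
      (fun i _ j _ hij ↦ Set.disjoint_left.2 fun l hi hj ↦
        hij ((Nat.floor_mul_eq_of_mem_Ico_s10 hN hi).symm.trans (Nat.floor_mul_eq_of_mem_Ico_s10 hN hj)))
      (fun j _ ↦ by rw [Real.volume_Ico]; exact le_of_eq (by congr 1; ring))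
      (fun j hj ↦ (mem_filter.1 hj).2)
  have hlt : (#bad : ℝ) * (1 / N) < v := by
    rw [← ENNReal.ofReal_lt_ofReal_iff_of_nonneg (by positivity),
      ENNReal.ofReal_mul (Nat.cast_nonneg _), ENNReal.ofReal_natCast]
    exact hcard.trans_lt hB
  rwa [mul_one_div, div_lt_iff₀ hN', mul_comm] at hlt

theorem exists_floor_mul_eq_floor_mul_s10 {B : Set ℝ} {L n m : ℕ}
    (hB : volume B < ENNReal.ofReal (1 / (L + 1))) (hn : 0 < n) (hnm : n ≤ m) (hmL : m ≤ L * n) :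
    ∃ l ∈ Set.Icc (1 : ℝ) (L + 1) \ B, ∃ l' ∈ Set.Icc (1 : ℝ) (L + 1) \ B,
      ⌊l * n⌋₊ = ⌊l' * m⌋₊ := by
  classical
  set J := Ico (L * n) (L * n + n)
  let bad (N : ℕ) := J.filter fun j : ℕ ↦ Set.Ico ((j : ℝ) / N) ((j + 1) / N) ⊆ B
  have hm : 0 < m := hn.trans_le hnm
  have hbad : (#(bad n) : ℝ) + #(bad m) < #J := by
    have h₁ := card_filter_Ico_subset_lt hB hn J
    have h₂ := card_filter_Ico_subset_lt hB hm J
    have hmL' : (m : ℝ) ≤ L * n := by exact_mod_cast hmL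
    rw [Nat.card_Ico, Nat.add_sub_cancel_left]
    calc (#(bad n) : ℝ) + #(bad m) < n * (1 / (L + 1)) + m * (1 / (L + 1)) := add_lt_add h₁ h₂
      _ ≤ n := by rw [← add_mul, mul_one_div, div_le_iff₀ (by positivity)]; linarith
  obtain ⟨j, hjJ, hj⟩ : ∃ j ∈ J, j ∉ bad n ∪ bad m := by
    by_contra! h
    have := card_le_card h
    have := card_union_le (bad n) (bad m)
    have : (#J : ℝ) ≤ #(bad n) + #(bad m) := by exact_mod_cast (by omega : #J ≤ _)
    linarith
  have hjJ' := mem_Ico.1 hjJ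
  have hL : 1 ≤ L := by
    by_contra! h; interval_cases L; omega
  -- for `n ≤ N ≤ m`, the interval `[j/N, (j+1)/N)` lies in `[1, L+1]`
  have hgood : ∀ N, n ≤ N → N ≤ m → j ∉ bad N →
      ∃ l ∈ Set.Icc (1 : ℝ) (L + 1) \ B, ⌊l * N⌋₊ = j := by
    intro N hnN hNm hjN
    have hN : 0 < N := hn.trans_le hnN
    have hN' : (0 : ℝ) < N := by exact_mod_cast hN
    obtain ⟨l, hl, hlB⟩ := Set.not_subset.1 fun h ↦ hjN (mem_filter.2 ⟨hjJ, h⟩)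
    refine ⟨l, ⟨⟨?_, ?_⟩, hlB⟩, Nat.floor_mul_eq_of_mem_Ico_s10 hN hl⟩
    · have : (N : ℝ) ≤ j := by exact_mod_cast (by nlinarith : N ≤ j)
      exact ((one_le_div hN').2 this).trans hl.1
    · have : (j : ℝ) + 1 ≤ (L + 1) * N := by exact_mod_cast (by nlinarith : j + 1 ≤ (L + 1) * N)
      exact hl.2.le.trans ((div_le_iff₀ hN').2 this)
  obtain ⟨l, hl, hlj⟩ := hgood n le_rfl hnm fun h ↦ hj (mem_union_left _ h)
  obtain ⟨l', hl', hl'j⟩ := hgood m hnm le_rfl fun h ↦ hj (mem_union_right _ h)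
  exact ⟨l, hl, l', hl', hlj.trans hl'j.symm⟩

theorem summable_of_sum_Ico_two_pow_mul_le_s10 {f : ℕ → ℝ} {N : ℕ} (hN : 0 < N)
    (hf : ∀ k, N ≤ k → 0 ≤ f k) {C q : ℝ} (hq₀ : 0 ≤ q) (hq : q < 1)
    (hblock : ∀ j, ∑ k ∈ Ico (2 ^ j * N) (2 ^ (j + 1) * N), f k ≤ C * q ^ j) :
    Summable f := by
  have hmono : ∀ j, 2 ^ j * N ≤ 2 ^ (j + 1) * N := fun j ↦
    Nat.mul_le_mul_right N (Nat.pow_le_pow_right two_pos j.le_succ)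
  have hdyadic : ∀ n, ∑ k ∈ Ico N (2 ^ n * N), f k
      = ∑ j ∈ range n, ∑ k ∈ Ico (2 ^ j * N) (2 ^ (j + 1) * N), f k := by
    intro n
    induction n with
    | zero => simp
    | succ n ih =>
      rw [sum_range_succ, ← ih, sum_Ico_consecutive _ _ (hmono n)]
      simpa using Nat.mul_le_mul_right N (Nat.one_le_two_pow (n := n))
  have hC : 0 ≤ C := by
    simpa using (sum_nonneg fun k hk ↦ hf k (by simpa using (mem_Ico.1 hk).1)).trans (hblock 0)
  rw [← summable_nat_add_iff N]
  refine summable_of_sum_range_le (c := C / (1 - q)) (fun k ↦ hf _ (by omega)) fun n ↦ ?_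
  calc ∑ k ∈ range n, f (k + N) = ∑ k ∈ Ico N (N + n), f k := by
        rw [sum_Ico_eq_sum_range, Nat.add_sub_cancel_left]; simp only [add_comm]
    _ ≤ ∑ k ∈ Ico N (2 ^ n * N), f k := by
        refine sum_le_sum_of_subset_of_nonneg (Ico_subset_Ico_right ?_)
          fun k hk _ ↦ hf k (mem_Ico.1 hk).1
        have := Nat.lt_two_pow_self (n := n)
        nlinarith
    _ ≤ ∑ j ∈ range n, C * q ^ j := hdyadic n ▸ sum_le_sum fun j _ ↦ hblock j
    _ ≤ C / (1 - q) := by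
        rw [← mul_sum, range_eq_Ico, ← mul_one_div, ← pow_zero q]
        exact mul_le_mul_of_nonneg_left (geom_sum_Ico_le_of_lt_one hq₀ hq) hC

theorem Summable.eventually_sum_lt {f : ℕ → ℝ} (hf : Summable f) {η : ℝ} (hη : 0 < η) :
    ∀ᶠ K in atTop, ∀ t : Finset ℕ, (∀ k ∈ t, K ≤ k) → ∑ k ∈ t, f k < η := by
  obtain ⟨s, hs⟩ := hf.vanishing (Iio_mem_nhds hη)
  filter_upwards [eventually_gt_atTop (s.sup id)] with K hK t ht
  exact hs t (disjoint_left.2 fun k hkt hks ↦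
    (ht k hkt).not_gt ((le_sup (f := id) hks).trans_lt hK))

theorem Real.rpow_mem_Icc_min_max {a b l ρ : ℝ} (ha : 0 < a) (hl : l ∈ Set.Icc a b) :
    l ^ ρ ∈ Set.Icc (min (a ^ ρ) (b ^ ρ)) (max (a ^ ρ) (b ^ ρ)) := by
  have hl₀ : 0 < l := ha.trans_le hl.1
  rcases le_total 0 ρ with h | h
  · exact ⟨(min_le_left _ _).trans (Real.rpow_le_rpow ha.le hl.1 h),
      (Real.rpow_le_rpow hl₀.le hl.2 h).trans (le_max_right _ _)⟩
  · exact ⟨(min_le_right _ _).trans (Real.rpow_le_rpow_of_nonpos hl₀ hl.2 h),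
      (Real.rpow_le_rpow_of_nonpos ha hl.1 h).trans (le_max_left _ _)⟩

namespace RegVar

variable {Q : ℕ → ℝ} {ρ γ : ℝ}

/-- By Egorov's theorem `Q ⌊l n⌋ / Q n → l ^ ρ` uniformly off a set of small measure. -/
theorem exists_measure_le_forall_le_mul (hQ : RegVar Q ρ) (hpos : ∀ᶠ n in atTop, 0 < Q n)
    {a b : ℝ} (ha : 0 < a) {δ : ℝ} (hδ : 0 < δ) :
    ∃ B, volume B ≤ ENNReal.ofReal δ ∧ ∃ C > 0, ∀ᶠ n : ℕ in atTop, ∀ l ∈ Set.Icc a b \ B,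
      Q ⌊l * n⌋₊ ≤ C * Q n ∧ Q n ≤ C * Q ⌊l * n⌋₊ := by
  obtain ⟨B, -, -, hB, hunif⟩ := tendstoUniformlyOn_of_ae_tendsto (μ := volume)
    (f := fun (n : ℕ) (l : ℝ) ↦ Q ⌊l * n⌋₊ / Q n) (g := fun l ↦ l ^ ρ)
    (fun n : ℕ ↦ ((measurable_from_nat.comp (Nat.measurable_floor.comp
      (measurable_id.mul_const (n : ℝ)))).div_const (Q n)).stronglyMeasurable)
    (measurable_id.pow_const ρ).stronglyMeasurable measurableSet_Icc measure_Icc_lt_top.ne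
    (ae_of_all _ fun l hl ↦ hQ l (ha.trans_le hl.1)) hδ
  set b' := max a b
  have hIcc : Set.Icc a b ⊆ Set.Icc a b' := Set.Icc_subset_Icc_right (le_max_right a b)
  set c := min (a ^ ρ) (b' ^ ρ)
  set M := max (a ^ ρ) (b' ^ ρ)
  have hc : 0 < c :=
    lt_min (by positivity) (Real.rpow_pos_of_pos (ha.trans_le (le_max_left a b)) ρ)
  refine ⟨B, hB, max (2 / c) (M + c), by positivity, ?_⟩
  filter_upwards [hpos, Metric.tendstoUniformlyOn_iff.1 hunif (c / 2) (by positivity)]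
    with n hn hclose l hl
  obtain ⟨hlρ₁, hlρ₂⟩ := Real.rpow_mem_Icc_min_max (ρ := ρ) ha (hIcc hl.1)
  have hdist := abs_sub_lt_iff.1 (hclose l hl)
  have hlow : c / 2 * Q n ≤ Q ⌊l * n⌋₊ := by
    rw [← le_div_iff₀ hn]; linarith
  have hup : Q ⌊l * n⌋₊ ≤ (M + c) * Q n := by
    rw [← div_le_iff₀ hn]; linarith
  have hlow' : Q n ≤ 2 / c * Q ⌊l * n⌋₊ := by
    rw [div_mul_eq_mul_div, le_div_iff₀ hc]; linarith
  exact ⟨hup.trans (mul_le_mul_of_nonneg_right (le_max_right _ _) hn.le),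
    hlow'.trans (mul_le_mul_of_nonneg_right (le_max_left _ _) (by nlinarith))⟩

/-- `Q j` with `j = ⌊l n⌋ = ⌊l' m⌋`, for `l, l'` off the exceptional set of
`exists_measure_le_forall_le_mul`, is comparable with both `Q m` and `Q n`. -/
theorem exists_le_mul_of_le_mul (hQ : RegVar Q ρ) (hpos : ∀ᶠ n in atTop, 0 < Q n) (L : ℕ) :
    ∃ C > 0, ∃ N, ∀ m n : ℕ, N ≤ m → N ≤ n → m ≤ L * n → n ≤ L * m → Q m ≤ C * Q n := by
  obtain ⟨B, hB, C, hC, hev⟩ := hQ.exists_measure_le_forall_le_mul hpos one_pos (b := L + 1)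
    (δ := 1 / (L + 2)) (by positivity)
  have hB' : volume B < ENNReal.ofReal (1 / (L + 1)) :=
    hB.trans_lt ((ENNReal.ofReal_lt_ofReal_iff (by positivity)).2
      (one_div_lt_one_div_of_lt (by positivity) (by linarith)))
  obtain ⟨N, hN⟩ := eventually_atTop.1 (hev.and (eventually_gt_atTop 0))
  have key : ∀ m n : ℕ, N ≤ n → n ≤ m → m ≤ L * n →
      Q m ≤ C ^ 2 * Q n ∧ Q n ≤ C ^ 2 * Q m := by
    intro m n hn hnm hmL
    obtain ⟨l, hl, l', hl', hj⟩ := exists_floor_mul_eq_floor_mul_s10 hB' (hN n hn).2 hnm hmL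
    obtain ⟨hjn, hnj⟩ := (hN n hn).1 l hl
    obtain ⟨hjm, hmj⟩ := (hN m (hn.trans hnm)).1 l' hl'
    rw [← hj] at hjm hmj
    constructor
    · calc Q m ≤ C * Q ⌊l * n⌋₊ := hmj
        _ ≤ C * (C * Q n) := mul_le_mul_of_nonneg_left hjn hC.le
        _ = C ^ 2 * Q n := by ring
    · calc Q n ≤ C * Q ⌊l * n⌋₊ := hnj
        _ ≤ C * (C * Q m) := mul_le_mul_of_nonneg_left hjm hC.le
        _ = C ^ 2 * Q m := by ring
  refine ⟨C ^ 2, by positivity, N, fun m n hm hn hmn hnm ↦ ?_⟩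
  rcases le_total n m with h | h
  · exact (key m n hn h hmn).1
  · exact (key n m hm h hnm).2

theorem summable_s10 (hQ : RegVar Q (-γ)) (hpos : ∀ᶠ n in atTop, 0 < Q n) (hγ : 1 < γ) :
    Summable Q := by
  obtain ⟨C, hC, N₁, hN₁⟩ := hQ.exists_le_mul_of_le_mul hpos 2
  have h2γ : (2 : ℝ) ^ (-γ) < 1 / 2 := by
    have := Real.rpow_lt_rpow_of_exponent_lt (by norm_num : (1 : ℝ) < 2) (by linarith : -γ < -1)
    rwa [Real.rpow_neg_one, ← one_div] at this
  obtain ⟨θ, hθγ, hθ⟩ := exists_between h2γ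
  have hθ₀ : 0 ≤ θ := (Real.rpow_nonneg zero_le_two _).trans hθγ.le
  have hhalve : ∀ᶠ n : ℕ in atTop, Q (2 * n) ≤ θ * Q n := by
    filter_upwards [hpos, (hQ 2 two_pos).eventually_lt_const hθγ] with n hn h
    rw [show ⌊(2 : ℝ) * n⌋₊ = 2 * n by exact_mod_cast Nat.floor_natCast (2 * n),
      div_lt_iff₀ hn] at h
    exact h.le
  obtain ⟨N, hN⟩ := eventually_atTop.1 (hhalve.and (hpos.and (eventually_ge_atTop (N₁ + 1))))
  have hdecay : ∀ j, Q (2 ^ j * N) ≤ θ ^ j * Q N := by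
    intro j
    induction j with
    | zero => simp
    | succ j ih =>
      calc Q (2 ^ (j + 1) * N) = Q (2 * (2 ^ j * N)) := by ring_nf
        _ ≤ θ * Q (2 ^ j * N) := (hN _ (Nat.le_mul_of_pos_left N (by positivity))).1
        _ ≤ θ * (θ ^ j * Q N) := mul_le_mul_of_nonneg_left ih hθ₀
        _ = θ ^ (j + 1) * Q N := by ring
  have hN₁N := (hN N le_rfl).2.2
  refine summable_of_sum_Ico_two_pow_mul_le_s10 (C := N * (C * Q N)) (q := 2 * θ) (by omega)
    (fun k hk ↦ (hN k hk).2.1.le) (by positivity) (by linarith) fun j ↦ ?_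
  have hjN : N ≤ 2 ^ j * N := Nat.le_mul_of_pos_left N (by positivity)
  calc ∑ k ∈ Ico (2 ^ j * N) (2 ^ (j + 1) * N), Q k
      ≤ ∑ _k ∈ Ico (2 ^ j * N) (2 ^ (j + 1) * N), C * Q (2 ^ j * N) := by
        refine sum_le_sum fun k hk ↦ hN₁ k _ ?_ ?_ ?_ ?_ <;> rw [mem_Ico, pow_succ] at hk <;>
          nlinarith
    _ = (2 ^ j * N) * (C * Q (2 ^ j * N)) := by
        rw [sum_const, Nat.card_Ico, nsmul_eq_mul, pow_succ]
        push_cast [Nat.sub_eq_of_eq_add (by ring : 2 ^ j * 2 * N = 2 ^ j * N + 2 ^ j * N)]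
        ring
    _ ≤ (2 ^ j * N) * (C * (θ ^ j * Q N)) := by gcongr; exact hdecay j
    _ = N * (C * Q N) * (2 * θ) ^ j := by ring

theorem eventually_sum_mul_le (hQ : RegVar Q (-γ)) (hpos : ∀ᶠ n in atTop, 0 < Q n)
    (hγ : 1 < γ) {ε : ℝ} (hε : 0 < ε) :
    ∀ᶠ K in atTop, ∀ᶠ n in atTop, ∑ k ∈ Ioc K (n - K), Q k * Q (n - k) ≤ ε * Q n := by
  obtain ⟨C, hC, N, hN⟩ := hQ.exists_le_mul_of_le_mul hpos 2
  obtain ⟨Np, hNp⟩ := eventually_atTop.1 hpos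
  filter_upwards [(hQ.summable_s10 hpos hγ).eventually_sum_lt (η := ε / (2 * C)) (by positivity),
    eventually_ge_atTop Np] with K hK hKp
  filter_upwards [eventually_ge_atTop (2 * N), eventually_ge_atTop Np] with n hn hnp
  -- the larger of the two indices is at least `n / 2`, so its `Q`-value is `O(Q n)`
  have hterm : ∀ k ∈ Ioc K (n - K), Q k * Q (n - k) ≤ C * Q n * (Q k + Q (n - k)) := by
    intro k hk
    obtain ⟨hk₁, hk₂⟩ := mem_Ioc.1 hk
    have hk₀ : 0 < Q k := hNp k (by omega)
    have hnk₀ : 0 < Q (n - k) := hNp _ (by omega)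
    rcases le_total k (n - k) with h | h
    · nlinarith [hN (n - k) n (by omega) (by omega) (by omega) (by omega)]
    · nlinarith [hN k n (by omega) (by omega) (by omega) (by omega)]
  have hreflect : ∑ k ∈ Ioc K (n - K), Q (n - k) = ∑ i ∈ (Ioc K (n - K)).image (n - ·), Q i :=
    (sum_image fun a ha b hb h ↦ by simp only [coe_Ioc, Set.mem_Ioc] at ha hb h; omega).symm
  have hCQ : 0 ≤ C * Q n := by have := hNp n hnp; positivity
  calc ∑ k ∈ Ioc K (n - K), Q k * Q (n - k)
      ≤ ∑ k ∈ Ioc K (n - K), C * Q n * (Q k + Q (n - k)) := sum_le_sum hterm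
    _ = C * Q n * (∑ k ∈ Ioc K (n - K), Q k + ∑ i ∈ (Ioc K (n - K)).image (n - ·), Q i) := by
        rw [← mul_sum, sum_add_distrib, hreflect]
    _ ≤ C * Q n * (ε / (2 * C) + ε / (2 * C)) := by
        gcongr
        · exact (hK _ fun k hk ↦ (mem_Ioc.1 hk).1.le).le
        · refine (hK _ fun i hi ↦ ?_).le
          obtain ⟨k, hk, rfl⟩ := mem_image.1 hi
          have := mem_Ioc.1 hk
          omega
    _ = ε * Q n := by field_simp; ring

end RegVar

theorem sum_Ioc_zero_eq_sum_range_succ {M : Type*} [AddCommMonoid M] (f : ℕ → M) (n : ℕ) :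
    ∑ k ∈ Ioc 0 n, f k = ∑ k ∈ range n, f (k + 1) := by
  induction n with
  | zero => simp
  | succ n ih => rw [sum_Ioc_succ_top (Nat.zero_le n), ih, sum_range_succ]

theorem abs_sub_sum_mul_sub_le {t c : ℕ → ℝ} {b p : ℝ} {K n : ℕ} (hKn : K ≤ n)
    (ht : ∀ k, 0 ≤ t k) (hc : ∀ k, 0 ≤ c k) (hb : 0 ≤ b) (hp : ∑ k ∈ Ioc 0 K, t k ≤ p) :
    |b - ∑ k ∈ Ioc 0 n, t k * c k - (1 - p) * b|
      ≤ (p - ∑ k ∈ Ioc 0 K, t k) * b + ∑ k ∈ Ioc 0 K, t k * |b - c k|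
        + ∑ k ∈ Ioc K n, t k * c k := by
  have hid : b - ∑ k ∈ Ioc 0 n, t k * c k - (1 - p) * b
      = (p - ∑ k ∈ Ioc 0 K, t k) * b + ∑ k ∈ Ioc 0 K, t k * (b - c k)
        - ∑ k ∈ Ioc K n, t k * c k := by
    rw [← sum_Ioc_consecutive _ (Nat.zero_le K) hKn]
    simp only [mul_sub, sum_sub_distrib, ← sum_mul]
    ring
  rw [hid]
  refine (abs_sub _ _).trans (add_le_add ((abs_add_le _ _).trans (add_le_add ?_ ?_)) ?_)
  · rw [abs_mul, abs_of_nonneg (sub_nonneg.2 hp), abs_of_nonneg hb]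
  · exact (abs_sum_le_sum_abs _ _).trans_eq
      (sum_congr rfl fun k _ ↦ by rw [abs_mul, abs_of_nonneg (ht k)])
  · exact (abs_of_nonneg (sum_nonneg fun k _ ↦ mul_nonneg (ht k) (hc k))).le

theorem sum_mul_abs_sub_le {ι : Type*} {s : Finset ι} {t c : ι → ℝ} {b η : ℝ}
    (ht : ∀ k ∈ s, 0 ≤ t k) (ht₁ : ∑ k ∈ s, t k ≤ 1) (hη : 0 ≤ η) (hc : ∀ k ∈ s, |b - c k| ≤ η) :
    ∑ k ∈ s, t k * |b - c k| ≤ η :=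
  calc ∑ k ∈ s, t k * |b - c k| ≤ ∑ k ∈ s, t k * η :=
        sum_le_sum fun k hk ↦ mul_le_mul_of_nonneg_left (hc k hk) (ht k hk)
    _ ≤ η := by rw [← sum_mul]; exact mul_le_of_le_one_left hη ht₁

section Renewal

variable {X : Type*} {Q t : ℕ → ℝ} {P : ℕ → X → ℝ} {p : ℝ} {far : ℕ → Set X}

theorem eventually_abs_sub_sum_mul_sub_le_tail_add (z : X) {K : ℕ} (hK : 1 ≤ K) {δ : ℝ}
    (hδ : 0 < δ)
    (hKconv : ∀ᶠ n in atTop, ∑ k ∈ Ioc K (n - K), Q k * Q (n - k) ≤ δ * Q n)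
    (ht : ∀ k, 0 ≤ t k) (hFK : ∑ k ∈ Ioc 0 K, t k ≤ p) (hp₁ : p ≤ 1)
    (htP : ∀ k, t k ≤ P k z) (hP : ∀ m x, 0 ≤ P m x) (hPQ : ∀ m, 1 ≤ m → ∀ x, P m x ≤ Q m)
    (hsmooth : ∀ k, ∀ ε > 0, ∀ᶠ n in atTop, ∀ x, |P (n - k) x - P n x| ≤ ε * Q n)
    (hfar : ∀ j, ∀ ε > 0, ∀ᶠ n in atTop, ∀ x ∈ far n, P j x ≤ ε) :
    ∀ᶠ n in atTop, ∀ x ∈ far n, |P n x - ∑ k ∈ Ioc 0 n, t k * P (n - k) x - (1 - p) * P n x|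
      ≤ (p - ∑ k ∈ Ioc 0 K, t k) * Q n + 3 * (δ * Q n) := by
  have hη : 0 < δ / (2 * K) := by positivity
  filter_upwards [hKconv, eventually_ge_atTop (2 * K),
    (eventually_all_finset (range (K + 1))).2 fun k _ ↦ hsmooth k _ hδ,
    (eventually_all_finset (range K)).2 fun j _ ↦ hsmooth j 1 one_pos,
    (eventually_all_finset (range K)).2 fun j _ ↦ hfar j _ hη]
    with n hconv_n hn hnear hret hfar_n x hx
  have hQn : 0 ≤ Q n := (hP n x).trans (hPQ n (by omega) x)
  have hhead : ∑ k ∈ Ioc 0 K, t k * |P n x - P (n - k) x| ≤ δ * Q n :=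
    sum_mul_abs_sub_le (fun k _ ↦ ht k) (hFK.trans hp₁) (by positivity) fun k hk ↦ by
      rw [abs_sub_comm]
      exact hnear k (mem_range.2 (Nat.lt_succ_of_le (mem_Ioc.1 hk).2)) x
  have hmiddle : ∑ k ∈ Ioc K (n - K), t k * P (n - k) x ≤ δ * Q n := by
    refine (sum_le_sum fun k hk ↦ ?_).trans hconv_n
    obtain ⟨hk₁, hk₂⟩ := mem_Ioc.1 hk
    exact mul_le_mul ((htP k).trans (hPQ k (by omega) z)) (hPQ _ (by omega) x) (hP _ x)
      ((hP k z).trans (hPQ k (by omega) z))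
  -- after a return at time `k > n - K` the walk must reach the far point `x` in `< K` steps
  have hlast : ∑ k ∈ Ioc (n - K) n, t k * P (n - k) x ≤ δ * Q n := by
    calc ∑ k ∈ Ioc (n - K) n, t k * P (n - k) x
        ≤ ∑ _k ∈ Ioc (n - K) n, 2 * Q n * (δ / (2 * K)) := by
          refine sum_le_sum fun k hk ↦ ?_
          obtain ⟨hk₁, hk₂⟩ := mem_Ioc.1 hk
          have hj : n - k ∈ range K := mem_range.2 (by omega)
          have hret_k := abs_le.1 (hret _ hj z)
          rw [Nat.sub_sub_self hk₂] at hret_k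
          refine mul_le_mul ?_ (hfar_n _ hj x hx) (hP _ x) (by positivity)
          linarith [htP k, hPQ n (by omega) z]
      _ = δ * Q n := by
          rw [sum_const, Nat.card_Ioc, Nat.sub_sub_self (by omega), nsmul_eq_mul]
          field_simp
  calc |P n x - ∑ k ∈ Ioc 0 n, t k * P (n - k) x - (1 - p) * P n x|
      ≤ (p - ∑ k ∈ Ioc 0 K, t k) * P n x + ∑ k ∈ Ioc 0 K, t k * |P n x - P (n - k) x|
        + ∑ k ∈ Ioc K n, t k * P (n - k) x :=
        abs_sub_sum_mul_sub_le (by omega) ht (fun k ↦ hP _ x) (hP n x) hFK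
    _ ≤ (p - ∑ k ∈ Ioc 0 K, t k) * Q n + δ * Q n + (δ * Q n + δ * Q n) := by
        rw [← sum_Ioc_consecutive _ (by omega : K ≤ n - K) (Nat.sub_le n K)]
        exact add_le_add (add_le_add (mul_le_mul_of_nonneg_left (hPQ n (by omega) x)
          (sub_nonneg.2 hFK)) hhead) (add_le_add hmiddle hlast)
    _ = (p - ∑ k ∈ Ioc 0 K, t k) * Q n + 3 * (δ * Q n) := by ring

/-- Deterministic core of the estimate: `t k` plays `P{τ = k}`, `P m x` plays `P{S_m = x}`. -/
theorem eventually_abs_sub_sum_mul_sub_le (z : X)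
    (hconv : ∀ ε > 0, ∀ᶠ K in atTop, ∀ᶠ n in atTop, ∑ k ∈ Ioc K (n - K), Q k * Q (n - k) ≤ ε * Q n)
    (ht : ∀ k, 0 ≤ t k) (hp : HasSum (fun k ↦ t (k + 1)) p) (hp₁ : p ≤ 1)
    (htP : ∀ k, t k ≤ P k z) (hP : ∀ m x, 0 ≤ P m x) (hPQ : ∀ m, 1 ≤ m → ∀ x, P m x ≤ Q m)
    (hsmooth : ∀ k, ∀ ε > 0, ∀ᶠ n in atTop, ∀ x, |P (n - k) x - P n x| ≤ ε * Q n)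
    (hfar : ∀ j, ∀ ε > 0, ∀ᶠ n in atTop, ∀ x ∈ far n, P j x ≤ ε) {ε : ℝ} (hε : 0 < ε) :
    ∀ᶠ n in atTop, ∀ x ∈ far n,
      |P n x - ∑ k ∈ Ioc 0 n, t k * P (n - k) x - (1 - p) * P n x| ≤ ε * Q n := by
  have hδ : 0 < ε / 4 := by positivity
  have htail : ∀ᶠ K in atTop, p - ∑ k ∈ Ioc 0 K, t k < ε / 4 := by
    simp_rw [sum_Ioc_zero_eq_sum_range_succ]
    exact (tendsto_const_nhds.sub hp.tendsto_sum_nat).eventually_lt_const (by simpa using hδ)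
  obtain ⟨K, hKtail, hKconv, hK⟩ := (htail.and ((hconv _ hδ).and (eventually_ge_atTop 1))).exists
  have hFK : ∑ k ∈ Ioc 0 K, t k ≤ p := by
    rw [sum_Ioc_zero_eq_sum_range_succ]; exact sum_le_hasSum _ (fun k _ ↦ ht _) hp
  filter_upwards [eventually_abs_sub_sum_mul_sub_le_tail_add z hK hδ hKconv ht hFK hp₁ htP hP hPQ
    hsmooth hfar, eventually_ge_atTop 1] with n hn hn₁ x hx
  have hQn : 0 ≤ Q n := (hP n x).trans (hPQ n hn₁ x)
  nlinarith [hn x hx]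

end Renewal

section RandomWalk

variable {Ω E : Type*} {mΩ : MeasurableSpace Ω} {μ : Measure Ω}

/-- The event `{τ = k}`, for `τ` the first return time of `S` to `0`. -/
def firstReturn [Zero E] (S : ℕ → Ω → E) (k : ℕ) : Set Ω :=
  {ω | S k ω = 0 ∧ ∀ j, 0 < j → j < k → S j ω ≠ 0}

theorem disjoint_firstReturn [Zero E] {S : ℕ → Ω → E} {j k : ℕ} (hj : 0 < j) (hk : 0 < k)
    (hjk : j ≠ k) : Disjoint (firstReturn S j) (firstReturn S k) := by
  refine Set.disjoint_left.2 fun ω hωj hωk ↦ ?_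
  rcases hjk.lt_or_gt with h | h
  · exact hωk.2 j hj h hωj.1
  · exact hωj.2 k hk h hωk.1

theorem exists_mem_firstReturn [Zero E] {S : ℕ → Ω → E} {ω : Ω} {j : ℕ} (hj : 0 < j)
    (hS : S j ω = 0) : ∃ k, 0 < k ∧ k ≤ j ∧ ω ∈ firstReturn S k := by
  classical
  have h : ∃ i, 0 < i ∧ S i ω = 0 := ⟨j, hj, hS⟩
  exact ⟨Nat.find h, (Nat.find_spec h).1, Nat.find_min' h ⟨hj, hS⟩, (Nat.find_spec h).2,
    fun i hi hik hi0 ↦ Nat.find_min h hik ⟨hi, hi0⟩⟩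

theorem measurableSet_firstReturn [Zero E] [MeasurableSpace E] [MeasurableSingletonClass E]
    {S : ℕ → Ω → E} {k : ℕ} (hS : ∀ j ≤ k, Measurable (S j)) :
    MeasurableSet (firstReturn S k) := by
  refine Measurable.setOf (((hS k le_rfl).eq_const 0).and (Measurable.forall fun j ↦ ?_))
  by_cases hjk : j < k
  · exact measurable_const.imp (measurable_const.imp ((hS j hjk.le).eq_const 0).not)
  · simp only [hjk, false_imp_iff, imp_true_iff]
    exact measurable_const

theorem tendsto_measure_lt_atTop [IsFiniteMeasure μ] {f : Ω → ℝ} (hf : Measurable f) :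
    Tendsto (fun R : ℝ ↦ μ {ω | R < f ω}) atTop (𝓝 0) := by
  have h := tendsto_measure_iInter_atTop (μ := μ) (s := fun R : ℝ ↦ {ω | R < f ω})
    (fun R ↦ (measurableSet_lt measurable_const hf).nullMeasurableSet)
    (fun R R' hR ω hω ↦ hR.trans_lt hω) ⟨0, measure_ne_top μ _⟩
  rwa [Set.iInter_eq_empty_iff.2 fun ω ↦ ⟨f ω, fun h ↦ lt_irrefl (f ω) h⟩, measure_empty] at h

theorem eventually_measureReal_eq_le_of_lt_norm [IsFiniteMeasure μ] [Norm E] {Y : Ω → E}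
    (hY : Measurable fun ω ↦ ‖Y ω‖) {r : ℕ → ℝ} (hr : Tendsto r atTop atTop) {ε : ℝ}
    (hε : 0 < ε) : ∀ᶠ n in atTop, ∀ x : E, r n < ‖x‖ → μ.real {ω | Y ω = x} ≤ ε := by
  filter_upwards [(tendsto_measure_lt_atTop (μ := μ) hY).comp hr |>.eventually
    (ge_mem_nhds (ENNReal.ofReal_pos.2 hε))] with n hn x hx
  refine (measureReal_mono fun ω (hω : Y ω = x) ↦ ?_).trans
    (ENNReal.toReal_le_of_le_ofReal hε.le hn)
  show r n < ‖Y ω‖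
  rwa [hω]

theorem measureReal_eq_add_sum_firstReturn [Zero E] [MeasurableSpace E]
    [MeasurableSingletonClass E] [IsFiniteMeasure μ] {S : ℕ → Ω → E} (hS : ∀ n, Measurable (S n))
    (n : ℕ) (x : E) :
    μ.real {ω | S n ω = x} = μ.real {ω | S n ω = x ∧ ∀ k, 0 < k → k ≤ n → S k ω ≠ 0}
      + ∑ k ∈ Ioc 0 n, μ.real (firstReturn S k ∩ {ω | S n ω = x}) := by
  have hmeas : ∀ k, MeasurableSet (firstReturn S k ∩ {ω | S n ω = x}) := fun k ↦
    (measurableSet_firstReturn fun j _ ↦ hS j).inter (hS n (measurableSet_singleton x))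
  have hset : {ω | S n ω = x} = {ω | S n ω = x ∧ ∀ k, 0 < k → k ≤ n → S k ω ≠ 0}
      ∪ ⋃ k ∈ Ioc 0 n, firstReturn S k ∩ {ω | S n ω = x} := by
    ext ω
    simp only [Set.mem_union, Set.mem_iUnion, Set.mem_inter_iff, mem_Ioc, exists_prop]
    constructor
    · intro hx
      by_cases h : ∀ k, 0 < k → k ≤ n → S k ω ≠ 0
      · exact Or.inl ⟨hx, h⟩
      obtain ⟨j, hj, hjn, hj0⟩ : ∃ j, 0 < j ∧ j ≤ n ∧ S j ω = 0 := by simpa using h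
      obtain ⟨k, hk, hkj, hkω⟩ := exists_mem_firstReturn hj hj0
      exact Or.inr ⟨k, ⟨hk, hkj.trans hjn⟩, hkω, hx⟩
    · rintro (h | ⟨k, -, -, h⟩)
      exacts [h.1, h]
  conv_lhs => rw [hset]
  rw [measureReal_union _ (Finset.measurableSet_biUnion _ fun k _ ↦ hmeas k) (measure_ne_top μ _)
      (measure_ne_top μ _),
    measureReal_biUnion_finset _ fun k _ ↦ hmeas k]
  · intro j hj k hk hjk
    exact (disjoint_firstReturn (mem_Ioc.1 hj).1 (mem_Ioc.1 hk).1 hjk).mono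
      Set.inter_subset_left Set.inter_subset_left
  · refine Set.disjoint_left.2 fun ω hω hω' ↦ ?_
    simp only [Set.mem_iUnion, mem_Ioc] at hω'
    obtain ⟨k, ⟨hk, hkn⟩, hkω, -⟩ := hω'
    exact hω.2 k hk hkn hkω.1

theorem hasSum_measureReal_firstReturn [Zero E] [MeasurableSpace E]
    [MeasurableSingletonClass E] [IsFiniteMeasure μ] {S : ℕ → Ω → E} (hS : ∀ n, Measurable (S n)) :
    HasSum (fun k ↦ μ.real (firstReturn S (k + 1))) (μ.real {ω | ∃ k, 1 ≤ k ∧ S k ω = 0}) := by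
  have hset : {ω | ∃ k, 1 ≤ k ∧ S k ω = 0} = ⋃ k, firstReturn S (k + 1) := by
    ext ω
    simp only [Set.mem_iUnion]
    constructor
    · rintro ⟨j, hj, hj0⟩
      obtain ⟨k, hk, -, hkω⟩ := exists_mem_firstReturn hj hj0
      exact ⟨k - 1, by rwa [Nat.sub_add_cancel hk]⟩
    · rintro ⟨k, hk⟩
      exact ⟨k + 1, Nat.le_add_left 1 k, hk.1⟩
  have h := measure_iUnion (μ := μ)
    (fun (i j : ℕ) hij ↦ disjoint_firstReturn i.succ_pos j.succ_pos (by simpa using hij))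
    (fun k ↦ measurableSet_firstReturn fun j _ ↦ hS j)
  rw [hset, measureReal_def, h, ENNReal.tsum_toReal_eq fun _ ↦ measure_ne_top μ _]
  exact (ENNReal.summable_toReal (h ▸ measure_ne_top μ _)).hasSum


variable [AddCommMonoid E] [MeasurableSpace E] [MeasurableAdd₂ E] {ξ : ℕ → Ω → E} {S : ℕ → Ω → E}

theorem measurable_sum_range {m : MeasurableSpace Ω} {n : ℕ} (hξ : ∀ i < n, Measurable (ξ i)) :
    Measurable fun ω ↦ ∑ i ∈ range n, ξ i ω :=
  Finset.measurable_sum _ fun i hi ↦ hξ i (mem_range.1 hi)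

theorem identDistrib_sum_range_add (hindep : iIndepFun ξ μ)
    (hident : ∀ i, IdentDistrib (ξ i) (ξ 0) μ μ) (k m : ℕ) :
    IdentDistrib (fun ω ↦ ∑ i ∈ range m, ξ (k + i) ω) (fun ω ↦ ∑ i ∈ range m, ξ i ω) μ μ :=
  (IdentDistrib.pi (fun i ↦ (hident (k + i)).trans (hident i).symm)
    (hindep.precomp (add_right_injective k)) hindep).comp
    (u := fun v : ℕ → E ↦ ∑ i ∈ range m, v i)
    (Finset.measurable_sum _ fun i _ ↦ measurable_pi_apply i)

theorem measurable_of_eq_sum (hmeas : ∀ i, Measurable (ξ i))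
    (hS : ∀ n ω, S n ω = ∑ i ∈ range n, ξ i ω) (n : ℕ) : Measurable (S n) := by
  rw [funext (hS n)]
  exact measurable_sum_range fun i _ ↦ hmeas i

/-- On `{τ = k}` the walk restarts from `0` independently of the past. -/
theorem measure_firstReturn_inter [MeasurableSingletonClass E] (hmeas : ∀ i, Measurable (ξ i))
    (hindep : iIndepFun ξ μ) (hident : ∀ i, IdentDistrib (ξ i) (ξ 0) μ μ)
    (hS : ∀ n ω, S n ω = ∑ i ∈ range n, ξ i ω)
    {k n : ℕ} (hkn : k ≤ n) (x : E) :
    μ (firstReturn S k ∩ {ω | S n ω = x}) = μ (firstReturn S k) * μ {ω | S (n - k) ω = x} := by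
  have hset : firstReturn S k ∩ {ω | S n ω = x}
      = firstReturn S k ∩ {ω | ∑ i ∈ range (n - k), ξ (k + i) ω = x} := by
    ext ω
    simp only [Set.mem_inter_iff, and_congr_right_iff]
    intro hω
    show S n ω = x ↔ _
    rw [hS, ← sum_range_add_sum_Ico _ hkn, ← hS, hω.1, zero_add, sum_Ico_eq_sum_range]
    exact Iff.rfl
  have hξ_le : ∀ {T : Set ℕ} {i}, i ∈ T →
      Measurable[⨆ j ∈ T, MeasurableSpace.comap (ξ j) inferInstance] (ξ i) := fun hi ↦
    Measurable.of_comap_le (le_iSup₂_of_le _ hi le_rfl)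
  have hpast : MeasurableSet[⨆ i ∈ Set.Iio k, MeasurableSpace.comap (ξ i) inferInstance]
      (firstReturn S k) :=
    measurableSet_firstReturn fun j hj ↦ by
      simp_rw [funext (hS j)]
      exact measurable_sum_range fun i hi ↦ hξ_le (Set.mem_Iio.2 (hi.trans_le hj))
  have hfuture : MeasurableSet[⨆ i ∈ Set.Ici k, MeasurableSpace.comap (ξ i) inferInstance]
      {ω | ∑ i ∈ range (n - k), ξ (k + i) ω = x} :=
    measurable_sum_range (fun i _ ↦ hξ_le (Set.mem_Ici.2 (Nat.le_add_right k i)))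
      (measurableSet_singleton x)
  rw [hset, (Indep_iff _ _ μ).1 (indep_iSup_of_disjoint (fun i ↦ (hmeas i).comap_le)
    hindep.iIndep (Set.Iio_disjoint_Ici le_rfl)) _ _ hpast hfuture, funext (hS (n - k))]
  exact congrArg _ ((identDistrib_sum_range_add hindep hident k (n - k)).measure_mem_eq
    (measurableSet_singleton x))

theorem measureReal_eq_and_forall_ne_zero [MeasurableSingletonClass E]
    (hmeas : ∀ i, Measurable (ξ i)) (hindep : iIndepFun ξ μ)
    (hident : ∀ i, IdentDistrib (ξ i) (ξ 0) μ μ) (hS : ∀ n ω, S n ω = ∑ i ∈ range n, ξ i ω)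
    (n : ℕ) (x : E) :
    μ.real {ω | S n ω = x ∧ ∀ k, 0 < k → k ≤ n → S k ω ≠ 0} = μ.real {ω | S n ω = x}
      - ∑ k ∈ Ioc 0 n, μ.real (firstReturn S k) * μ.real {ω | S (n - k) ω = x} := by
  have := hindep.isProbabilityMeasure
  have hsum : ∑ k ∈ Ioc 0 n, μ.real (firstReturn S k ∩ {ω | S n ω = x})
      = ∑ k ∈ Ioc 0 n, μ.real (firstReturn S k) * μ.real {ω | S (n - k) ω = x} :=
    sum_congr rfl fun k hk ↦ by
      simp only [measureReal_def, measure_firstReturn_inter hmeas hindep hident hS (mem_Ioc.1 hk).2,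
        ENNReal.toReal_mul]
  rw [measureReal_eq_add_sum_firstReturn (measurable_of_eq_sum hmeas hS) n x, hsum,
    add_sub_cancel_right]

end RandomWalk

/-- Lemma 1 of the paper: under a uniform local bound
`P{S_n = x} ≤ Q_n` with `Q` regularly varying of index `-γ`, `γ > 1`, and a
uniform smoothness condition, one has, uniformly in `‖x‖ > r_n`,
`P{S_n = x, τ > n} = (1-p) P{S_n = x} + o(Q_n)`. -/
theorem stmt10
    {d : ℕ} {Ω : Type*} [MeasurableSpace Ω]
    (μ : MeasureTheory.Measure Ω) [MeasureTheory.IsProbabilityMeasure μ]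
    (ξ : ℕ → Ω → (Fin d → ℤ))
    (hmeas : ∀ i, Measurable (ξ i))
    (hindep : ProbabilityTheory.iIndepFun ξ μ)
    (hident : ∀ i, ProbabilityTheory.IdentDistrib (ξ i) (ξ 0) μ μ)
    (S : ℕ → Ω → (Fin d → ℤ))
    (hS : ∀ n ω, S n ω = ∑ i ∈ Finset.range n, ξ i ω)
    (Q : ℕ → ℝ) (hQpos : ∀ n, 1 ≤ n → 0 < Q n)
    (γ : ℝ) (hγ : 1 < γ) (hQrv : RegVar Q (-γ))
    (hbound : ∀ n, 1 ≤ n → ∀ x : Fin d → ℤ, (μ {ω | S n ω = x}).toReal ≤ Q n)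
    (hsmooth : ∀ k : ℕ, ∀ ε > (0 : ℝ), ∃ N, ∀ n ≥ N, ∀ x : Fin d → ℤ,
      |(μ {ω | S (n - k) ω = x}).toReal - (μ {ω | S n ω = x}).toReal| ≤ ε * Q n)
    (r : ℕ → ℝ) (hr : Filter.Tendsto r Filter.atTop Filter.atTop)
    (p : ℝ) (hp : p = (μ {ω | ∃ k, 1 ≤ k ∧ S k ω = 0}).toReal) :
    ∀ ε > (0 : ℝ), ∃ N, ∀ n ≥ N, ∀ x : Fin d → ℤ, r n < ‖x‖ →
      |(μ {ω | S n ω = x ∧ ∀ k, 0 < k → k ≤ n → S k ω ≠ 0}).toReal -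
        (1 - p) * (μ {ω | S n ω = x}).toReal| ≤ ε * Q n := by
  intro ε hε
  subst hp
  have hSm := measurable_of_eq_sum hmeas hS
  have hpos : ∀ᶠ n in atTop, 0 < Q n := eventually_atTop.2 ⟨1, hQpos⟩
  obtain ⟨N, hN⟩ := eventually_atTop.1 <| eventually_abs_sub_sum_mul_sub_le
    (t := fun k ↦ μ.real (firstReturn S k)) (P := fun m x ↦ μ.real {ω | S m ω = x})
    (far := fun n ↦ {x | r n < ‖x‖}) 0
    (fun _ hε ↦ hQrv.eventually_sum_mul_le hpos hγ hε) (fun _ ↦ measureReal_nonneg)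
    (hasSum_measureReal_firstReturn hSm) measureReal_le_one
    (fun _ ↦ measureReal_mono fun _ h ↦ h.1) (fun _ _ ↦ measureReal_nonneg) hbound
    (fun k _ hε ↦ eventually_atTop.2 (hsmooth k _ hε))
    (fun j _ hε ↦ eventually_measureReal_eq_le_of_lt_norm (hSm j).norm hr hε) hε
  refine ⟨N, fun n hn x hx ↦ ?_⟩
  rw [← measureReal_def, measureReal_eq_and_forall_ne_zero hmeas hindep hident hS]
  exact hN n hn x hx
end
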